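/- arXiv:2009.14140 — 4 statements merged into one kernel-verified Lean document; each statement's English description precedes it below -/
import Mathlib

section
/- For all real numbers α, β with 0 ≤ α ≤ β, there exists a constant c > 0 (depending only on α and β) such that for every integer p ≥ 1 and every real polynomial q in one variable of degree at most p, both ∫_{-1}^{1} (1 - x)^α q(x)² dx ≤ c · p^{2(β−α)} · ∫_{-1}^{1} (1 - x)^β q(x)² dx and ∫_{-1}^{1} (1 + x)^α q(x)² dx ≤ c · p^{2(β−α)} · ∫_{-1}^{1} (1 + x)^β q(x)² dx hold. -/
/-!
Split `[-1, 1]` at `1 - p⁻²`. Away from `1` the weights compare pointwise,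
`(1 - x) ^ α ≤ p ^ (2 (β - α)) (1 - x) ^ β`; on the last piece, of length `p⁻²`, it suffices to
bound `‖q‖∞²` by `p ^ (2β + 2) ∫ (1 - x) ^ β q²` (a weighted Nikolskii inequality). For this, the
maximum principle and Cauchy's estimate for the Joukowski lift `z ^ p q ((z + z⁻¹) / 2)` give
Bernstein's inequality `|q'(x)| √(1 - x²) ≲ p ‖q‖∞` and the growth bound `|q y| ≤ ‖q‖∞ r ^ p` for
`|y| ≤ (r + r⁻¹) / 2`. Together they keep `|q|` above half its maximum on an interval of length
`≍ p⁻²` inside `[-1, 1 - p⁻²/16]`, where the weight is `≳ p ^ (-2β)`. The weight `1 + x` is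
reduced to `1 - x` by `x ↦ -x`.
-/

open MeasureTheory Polynomial Set

namespace OneSidedBubble

/-- The polynomial `z ^ p * q ((z + z⁻¹) / 2)`, for `q.natDegree ≤ p`. -/
noncomputable def joukowskiLift (q : ℝ[X]) (p : ℕ) : ℂ[X] :=
  ∑ k ∈ Finset.range (p + 1), C ((q.coeff k : ℂ) / 2 ^ k) * X ^ (p - k) * (X ^ 2 + 1) ^ k

variable {q : ℝ[X]} {p : ℕ} {M : ℝ}

lemma eval_joukowskiLift (hq : q.natDegree ≤ p) {z : ℂ} (hz : z ≠ 0) :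
    (joukowskiLift q p).eval z = z ^ p * aeval ((z + z⁻¹) / 2) q := by
  rw [aeval_eq_sum_range' (Nat.lt_succ_of_le hq), joukowskiLift, eval_finsetSum,
    Finset.mul_sum]
  refine Finset.sum_congr rfl fun k hk => ?_
  have hkp : k ≤ p := Nat.lt_succ_iff.mp (Finset.mem_range.mp hk)
  have hzp : z ^ p = z ^ (p - k) * z ^ k := by rw [← pow_add, Nat.sub_add_cancel hkp]
  have hbase : (z + z⁻¹) / 2 = (z ^ 2 + 1) / (2 * z) := by field_simp
  simp only [eval_mul, eval_pow, eval_C, eval_X, eval_add, eval_one, Algebra.smul_def,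
    Complex.coe_algebraMap, hzp, hbase, div_pow, mul_pow]
  field_simp

lemma eval_joukowskiLift_eq_pow_mul_eval_inv (hq : q.natDegree ≤ p) {z : ℂ} (hz : z ≠ 0) :
    (joukowskiLift q p).eval z = z ^ (2 * p) * (joukowskiLift q p).eval z⁻¹ := by
  rw [eval_joukowskiLift hq hz, eval_joukowskiLift hq (inv_ne_zero hz), inv_inv, add_comm z⁻¹,
    two_mul, pow_add, inv_pow]
  field_simp

lemma eval_joukowskiLift_of_norm_eq_one (hq : q.natDegree ≤ p) {z : ℂ} (hz : ‖z‖ = 1) :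
    (joukowskiLift q p).eval z = z ^ p * ((q.eval z.re : ℝ) : ℂ) := by
  have hz0 : z ≠ 0 := norm_ne_zero_iff.mp (by rw [hz]; exact one_ne_zero)
  have hre : (z + z⁻¹) / 2 = (z.re : ℂ) := by
    rw [Complex.inv_def, Complex.normSq_eq_norm_sq, hz, Complex.re_eq_add_conj]
    simp
  rw [eval_joukowskiLift hq hz0, hre, ← Complex.coe_algebraMap,
    aeval_algebraMap_apply_eq_algebraMap_eval]

lemma norm_eval_joukowskiLift_le_of_norm_le_one (hq : q.natDegree ≤ p)
    (hM : ∀ x ∈ Icc (-1 : ℝ) 1, |q.eval x| ≤ M) {z : ℂ} (hz : ‖z‖ ≤ 1) :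
    ‖(joukowskiLift q p).eval z‖ ≤ M := by
  have hsphere : ∀ w ∈ frontier (Metric.ball (0 : ℂ) 1), ‖(joukowskiLift q p).eval w‖ ≤ M := by
    intro w hw
    rw [frontier_ball 0 one_ne_zero, mem_sphere_zero_iff_norm] at hw
    rw [eval_joukowskiLift_of_norm_eq_one hq hw, norm_mul, norm_pow, hw, one_pow, one_mul,
      Complex.norm_real, Real.norm_eq_abs]
    exact hM _ (abs_le.mp ((Complex.abs_re_le_norm w).trans hw.le))
  refine Complex.norm_le_of_forall_mem_frontier_norm_le Metric.isBounded_ball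
    (joukowskiLift q p).differentiable.diffContOnCl hsphere ?_
  rwa [closure_ball 0 one_ne_zero, mem_closedBall_zero_iff]

lemma norm_eval_joukowskiLift_le_of_one_le_norm (hq : q.natDegree ≤ p)
    (hM : ∀ x ∈ Icc (-1 : ℝ) 1, |q.eval x| ≤ M) {z : ℂ} (hz : 1 ≤ ‖z‖) :
    ‖(joukowskiLift q p).eval z‖ ≤ M * ‖z‖ ^ (2 * p) := by
  have hz0 : z ≠ 0 := norm_pos_iff.mp (one_pos.trans_le hz)
  rw [eval_joukowskiLift_eq_pow_mul_eval_inv hq hz0, norm_mul, norm_pow, mul_comm]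
  gcongr
  exact norm_eval_joukowskiLift_le_of_norm_le_one hq hM
    (by rw [norm_inv]; exact inv_le_one_of_one_le₀ hz)

lemma norm_eval_joukowskiLift_le (hq : q.natDegree ≤ p)
    (hM : ∀ x ∈ Icc (-1 : ℝ) 1, |q.eval x| ≤ M) {R : ℝ} (hR : 1 ≤ R) {z : ℂ} (hz : ‖z‖ ≤ R) :
    ‖(joukowskiLift q p).eval z‖ ≤ M * R ^ (2 * p) := by
  have hM0 : 0 ≤ M := (abs_nonneg _).trans (hM 0 (by norm_num))
  rcases le_total ‖z‖ 1 with hz1 | hz1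
  · exact (norm_eval_joukowskiLift_le_of_norm_le_one hq hM hz1).trans
      (le_mul_of_one_le_right hM0 (one_le_pow₀ hR))
  · exact (norm_eval_joukowskiLift_le_of_one_le_norm hq hM hz1).trans (by gcongr)

lemma one_add_inv_pow_two_mul_le_exp_two (p : ℕ) : (1 + (p : ℝ)⁻¹) ^ (2 * p) ≤ Real.exp 2 := by
  rw [mul_comm, pow_mul, show (2 : ℝ) = 1 * 2 by norm_num, Real.exp_mul, Real.rpow_two]
  gcongr
  exact Real.one_add_inv_pow_le_exp

/-- Cauchy's estimate on the circle of radius `p⁻¹`, on which `|z| ≤ 1 + p⁻¹`. -/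
lemma norm_eval_derivative_joukowskiLift_le (hq : q.natDegree ≤ p) (hp : 0 < p)
    (hM : ∀ x ∈ Icc (-1 : ℝ) 1, |q.eval x| ≤ M) {z : ℂ} (hz : ‖z‖ = 1) :
    ‖(derivative (joukowskiLift q p)).eval z‖ ≤ Real.exp 2 * p * M := by
  have hM0 : 0 ≤ M := (abs_nonneg _).trans (hM 0 (by norm_num))
  have hp' : (0 : ℝ) < p := Nat.cast_pos.mpr hp
  have hsphere : ∀ w ∈ Metric.sphere z (p : ℝ)⁻¹,
      ‖(joukowskiLift q p).eval w‖ ≤ M * Real.exp 2 := by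
    intro w hw
    have hw' : ‖w‖ ≤ 1 + (p : ℝ)⁻¹ := by
      calc ‖w‖ ≤ ‖z‖ + ‖w - z‖ := norm_le_norm_add_norm_sub' w z
        _ = 1 + (p : ℝ)⁻¹ := by rw [hz, ← dist_eq_norm, Metric.mem_sphere.mp hw]
    refine (norm_eval_joukowskiLift_le hq hM (by simp) hw').trans ?_
    gcongr
    exact one_add_inv_pow_two_mul_le_exp_two p
  have hcauchy := Complex.norm_deriv_le_of_forall_mem_sphere_norm_le (inv_pos.mpr hp')
    (joukowskiLift q p).differentiable.diffContOnCl hsphere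
  rw [Polynomial.deriv, div_inv_eq_mul] at hcauchy
  linarith

/-- Differentiate `J (exp (θ i)) = exp (θ i) ^ p q (cos θ)` in `θ`. -/
lemma exp_pow_mul_eval_derivative_cos_mul_sin (hq : q.natDegree ≤ p) (hp : 0 < p) (θ : ℝ) :
    Complex.exp (θ * Complex.I) ^ p *
        (((derivative q).eval (Real.cos θ) * Real.sin θ : ℝ) : ℂ) =
      Complex.I * ((p : ℂ) * Complex.exp (θ * Complex.I) ^ p * ((q.eval (Real.cos θ) : ℝ) : ℂ) -
        Complex.exp (θ * Complex.I) *
          (derivative (joukowskiLift q p)).eval (Complex.exp (θ * Complex.I))) := by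
  set z := Complex.exp (θ * Complex.I)
  have hcircle : ∀ t : ℝ, (joukowskiLift q p).eval (Complex.exp (t * Complex.I)) =
      Complex.exp (t * Complex.I) ^ p * ((q.eval (Real.cos t) : ℝ) : ℂ) := fun t => by
    rw [eval_joukowskiLift_of_norm_eq_one hq (Complex.norm_exp_ofReal_mul_I t),
      Complex.exp_ofReal_mul_I_re]
  have hexp : HasDerivAt (fun t : ℝ => Complex.exp (t * Complex.I)) (z * Complex.I) θ := by
    simpa using ((hasDerivAt_id (θ : ℂ)).mul_const Complex.I).cexp.comp_ofReal
  have hlhs := ((joukowskiLift q p).hasDerivAt z).comp θ hexp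
  have hrhs : HasDerivAt (fun t : ℝ => (joukowskiLift q p).eval (Complex.exp (t * Complex.I)))
      ((p : ℂ) * z ^ (p - 1) * (z * Complex.I) * ((q.eval (Real.cos θ) : ℝ) : ℂ) +
        z ^ p * (((derivative q).eval (Real.cos θ) * -Real.sin θ : ℝ) : ℂ)) θ := by
    rw [funext hcircle]
    exact (hexp.pow p).mul ((q.hasDerivAt (Real.cos θ)).comp θ (Real.hasDerivAt_cos θ)).ofReal_comp
  have hderiv := hrhs.unique hlhs
  have hzp : z ^ p = z ^ (p - 1) * z := by rw [← pow_succ, Nat.sub_add_cancel hp]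
  rw [hzp] at hderiv ⊢
  push_cast at hderiv ⊢
  linear_combination -hderiv

lemma abs_eval_derivative_cos_mul_sin_le (hq : q.natDegree ≤ p) (hp : 0 < p)
    (hM : ∀ x ∈ Icc (-1 : ℝ) 1, |q.eval x| ≤ M) (θ : ℝ) :
    |(derivative q).eval (Real.cos θ) * Real.sin θ| ≤ (1 + Real.exp 2) * p * M := by
  set z := Complex.exp (θ * Complex.I)
  have hz : ‖z‖ = 1 := Complex.norm_exp_ofReal_mul_I θ
  have hnorm := congrArg norm (exp_pow_mul_eval_derivative_cos_mul_sin hq hp θ)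
  rw [norm_mul, norm_mul, norm_pow, hz, one_pow, one_mul, Complex.norm_I, one_mul,
    Complex.norm_real, Real.norm_eq_abs] at hnorm
  rw [hnorm]
  have hqz : |q.eval (Real.cos θ)| ≤ M := hM _ ⟨Real.neg_one_le_cos θ, Real.cos_le_one θ⟩
  calc ‖(p : ℂ) * z ^ p * ((q.eval (Real.cos θ) : ℝ) : ℂ) -
        z * (derivative (joukowskiLift q p)).eval z‖
      ≤ p * |q.eval (Real.cos θ)| + ‖(derivative (joukowskiLift q p)).eval z‖ := by
        refine (norm_sub_le _ _).trans_eq ?_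
        rw [norm_mul, norm_mul, norm_mul, norm_pow, hz, one_pow, mul_one, one_mul,
          Complex.norm_natCast, Complex.norm_real, Real.norm_eq_abs]
    _ ≤ p * M + Real.exp 2 * p * M := by
        gcongr
        exact norm_eval_derivative_joukowskiLift_le hq hp hM hz
    _ = (1 + Real.exp 2) * p * M := by ring

/-- Bernstein's inequality, with constant `1 + e²` in place of `1`. -/
lemma abs_eval_derivative_mul_sqrt_le (hq : q.natDegree ≤ p) (hp : 0 < p)
    (hM : ∀ x ∈ Icc (-1 : ℝ) 1, |q.eval x| ≤ M) {x : ℝ} (hx : x ∈ Icc (-1 : ℝ) 1) :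
    |(derivative q).eval x| * √(1 - x ^ 2) ≤ (1 + Real.exp 2) * p * M := by
  have h := abs_eval_derivative_cos_mul_sin_le hq hp hM (Real.arccos x)
  rwa [Real.cos_arccos hx.1 hx.2, Real.sin_arccos, abs_mul, abs_of_nonneg (Real.sqrt_nonneg _)]
    at h

lemma norm_aeval_joukowski_le (hq : q.natDegree ≤ p)
    (hM : ∀ x ∈ Icc (-1 : ℝ) 1, |q.eval x| ≤ M) {w : ℂ} (hw : 1 ≤ ‖w‖) :
    ‖aeval ((w + w⁻¹) / 2) q‖ ≤ M * ‖w‖ ^ p := by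
  have hw0 : w ≠ 0 := norm_pos_iff.mp (one_pos.trans_le hw)
  have h := norm_eval_joukowskiLift_le_of_one_le_norm hq hM hw
  rw [eval_joukowskiLift hq hw0, norm_mul, norm_pow, two_mul, pow_add, ← mul_assoc,
    mul_comm (‖w‖ ^ p)] at h
  exact le_of_mul_le_mul_right h (pow_pos (one_pos.trans_le hw) p)

lemma abs_eval_le_mul_pow_of_abs_eq (hq : q.natDegree ≤ p)
    (hM : ∀ x ∈ Icc (-1 : ℝ) 1, |q.eval x| ≤ M) {s y : ℝ} (hs : 1 ≤ s)
    (hy : |y| = (s + s⁻¹) / 2) : |q.eval y| ≤ M * s ^ p := by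
  have hw : ∀ w : ℝ, |w| = s → ((w + w⁻¹) / 2 : ℝ) = y → |q.eval y| ≤ M * s ^ p := by
    rintro w hws rfl
    have h := norm_aeval_joukowski_le hq hM (w := w)
      (by rwa [Complex.norm_real, Real.norm_eq_abs, hws])
    rwa [Complex.norm_real, Real.norm_eq_abs, hws, ← Complex.ofReal_inv, ← Complex.ofReal_add,
      ← Complex.ofReal_ofNat, ← Complex.ofReal_div, ← Complex.coe_algebraMap,
      aeval_algebraMap_apply_eq_algebraMap_eval, Complex.coe_algebraMap, Complex.norm_real,
      Real.norm_eq_abs] at h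
  rcases abs_choice y with hy' | hy'
  · exact hw s (abs_of_nonneg (by linarith)) (by linarith)
  · exact hw (-s) (by rw [abs_neg, abs_of_nonneg (by linarith)]) (by rw [inv_neg]; linarith)

lemma abs_eval_le_mul_pow_of_abs_le (hq : q.natDegree ≤ p)
    (hM : ∀ x ∈ Icc (-1 : ℝ) 1, |q.eval x| ≤ M) {r y : ℝ} (hr : 1 ≤ r)
    (hy : |y| ≤ (r + r⁻¹) / 2) : |q.eval y| ≤ M * r ^ p := by
  have hM0 : 0 ≤ M := (abs_nonneg _).trans (hM 0 (by norm_num))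
  rcases le_or_gt |y| 1 with hy1 | hy1
  · exact (hM y (abs_le.mp hy1)).trans (le_mul_of_one_le_right hM0 (one_le_pow₀ hr))
  set s := |y| + √(y ^ 2 - 1)
  have hroot : √(y ^ 2 - 1) ^ 2 = y ^ 2 - 1 := Real.sq_sqrt (by nlinarith [sq_abs y])
  have hs : 1 ≤ s := by linarith [Real.sqrt_nonneg (y ^ 2 - 1)]
  have hsinv : s⁻¹ = |y| - √(y ^ 2 - 1) := by
    refine inv_eq_of_mul_eq_one_right ?_
    nlinarith [sq_abs y]
  have hys : |y| = (s + s⁻¹) / 2 := by rw [hsinv]; ring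
  -- `t ↦ t + t⁻¹` is increasing on `[1, ∞)`
  have hsr : s ≤ r := by
    by_contra! hrs
    have hr0 : 0 < r := one_pos.trans_le hr
    have : r + r⁻¹ < s + s⁻¹ := by
      have key : s + s⁻¹ - (r + r⁻¹) = (s - r) * (r * s - 1) / (r * s) := by
        field_simp
        ring
      have : 0 < (s - r) * (r * s - 1) / (r * s) := by
        apply div_pos (mul_pos (by linarith) (by nlinarith)) (by positivity)
      linarith
    linarith
  exact (abs_eval_le_mul_pow_of_abs_eq hq hM hs hys).trans (by gcongr)

lemma abs_eval_le_mul_pow_of_le_on_Icc (hq : q.natDegree ≤ p) {a r : ℝ} (ha : 0 < a)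
    (hr : 1 ≤ r) (har : 1 ≤ a * ((r + r⁻¹) / 2)) (hM : ∀ x ∈ Icc (-a) a, |q.eval x| ≤ M)
    {y : ℝ} (hy : y ∈ Icc (-1 : ℝ) 1) : |q.eval y| ≤ M * r ^ p := by
  have hdeg : (q.comp (C a * X)).natDegree ≤ p :=
    natDegree_comp_le.trans (by rw [natDegree_C_mul_X a ha.ne', mul_one]; exact hq)
  have hMa : ∀ x ∈ Icc (-1 : ℝ) 1, |(q.comp (C a * X)).eval x| ≤ M := by
    intro x hx
    rw [eval_comp, eval_mul, eval_C, eval_X]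
    exact hM _ ⟨by nlinarith [hx.1], by nlinarith [hx.2]⟩
  have hya : |y / a| ≤ (r + r⁻¹) / 2 := by
    rw [abs_div, abs_of_pos ha, div_le_iff₀ ha]
    linarith [abs_le.mpr hy]
  have h := abs_eval_le_mul_pow_of_abs_le hdeg hMa hr hya
  rwa [eval_comp, eval_mul, eval_C, eval_X, mul_div_cancel₀ y ha.ne'] at h

/-- Take `r = 1 + p⁻¹`, for which `(1 - (8p²)⁻¹) (r + r⁻¹) / 2 ≥ 1` and `r ^ p ≤ e`. -/
lemma abs_eval_le_exp_one_mul_of_le_on_Icc (hq : q.natDegree ≤ p) (hp : 0 < p)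
    (hM : ∀ x ∈ Icc (-(1 - (8 * p ^ 2 : ℝ)⁻¹)) (1 - (8 * p ^ 2 : ℝ)⁻¹), |q.eval x| ≤ M)
    {y : ℝ} (hy : y ∈ Icc (-1 : ℝ) 1) : |q.eval y| ≤ Real.exp 1 * M := by
  have hp' : (1 : ℝ) ≤ p := Nat.one_le_cast.mpr hp
  have ha : 0 < 1 - (8 * p ^ 2 : ℝ)⁻¹ := by
    rw [sub_pos]; exact inv_lt_one_of_one_lt₀ (by nlinarith)
  have hM0 : 0 ≤ M := (abs_nonneg _).trans (hM 0 ⟨by linarith, ha.le⟩)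
  have har : 1 ≤ (1 - (8 * p ^ 2 : ℝ)⁻¹) * ((1 + (p : ℝ)⁻¹ + (1 + (p : ℝ)⁻¹)⁻¹) / 2) := by
    rw [← sub_nonneg]
    have : (1 - (8 * p ^ 2 : ℝ)⁻¹) * ((1 + (p : ℝ)⁻¹ + (1 + (p : ℝ)⁻¹)⁻¹) / 2) - 1 =
        (6 * p ^ 2 - 2 * p - 1) / (16 * p ^ 3 * (p + 1)) := by
      field_simp
      ring
    rw [this]
    apply div_nonneg <;> nlinarith
  calc |q.eval y| ≤ M * (1 + (p : ℝ)⁻¹) ^ p :=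
        abs_eval_le_mul_pow_of_le_on_Icc hq ha (by simp) har hM hy
    _ ≤ M * Real.exp 1 := by gcongr; exact Real.one_add_inv_pow_le_exp
    _ = Real.exp 1 * M := mul_comm _ _

lemma abs_eval_derivative_le (hq : q.natDegree ≤ p) (hp : 0 < p)
    (hM : ∀ x ∈ Icc (-1 : ℝ) 1, |q.eval x| ≤ M) {x : ℝ} (hx : |x| ≤ 1 - (16 * p ^ 2 : ℝ)⁻¹) :
    |(derivative q).eval x| ≤ 4 * (1 + Real.exp 2) * p ^ 2 * M := by
  have hp' : (0 : ℝ) < p := Nat.cast_pos.mpr hp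
  have hx1 : x ∈ Icc (-1 : ℝ) 1 := abs_le.mp (hx.trans (by simp only [sub_le_self_iff]; positivity))
  have hsqrt : (4 * p : ℝ)⁻¹ ≤ √(1 - x ^ 2) := by
    rw [show (4 * p : ℝ)⁻¹ = √((16 * p ^ 2 : ℝ)⁻¹) by
      rw [show (16 * p ^ 2 : ℝ) = (4 * p) ^ 2 by ring, ← inv_pow, Real.sqrt_sq (by positivity)]]
    apply Real.sqrt_le_sqrt
    have hx2 : x ^ 2 ≤ |x| := by
      rw [← sq_abs]; nlinarith [abs_nonneg x, abs_le.mpr hx1]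
    linarith
  have h := (mul_le_mul_of_nonneg_left hsqrt (abs_nonneg _)).trans
    (abs_eval_derivative_mul_sqrt_le hq hp hM hx1)
  rw [← div_eq_mul_inv, div_le_iff₀ (by positivity)] at h
  linarith

lemma le_abs_add_mul_of_abs_deriv_le {f : ℝ → ℝ} (hf : Differentiable ℝ f) {u ℓ L : ℝ}
    (hL : ∀ x ∈ Icc u (u + ℓ), |deriv f x| ≤ L) {x : ℝ} (hx : x ∈ Icc u (u + ℓ)) :
    |f u| ≤ |f x| + L * ℓ := by
  have hL0 : 0 ≤ L := (abs_nonneg _).trans (hL x hx)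
  have hmvt := (convex_Icc u (u + ℓ)).norm_image_sub_le_of_norm_deriv_le (fun t _ => hf t)
    (fun t ht => (Real.norm_eq_abs _).trans_le (hL t ht))
    (left_mem_Icc.mpr (hx.1.trans hx.2)) hx
  rw [Real.norm_eq_abs, Real.norm_eq_abs, abs_of_nonneg (sub_nonneg.mpr hx.1)] at hmvt
  have hxu : L * (x - u) ≤ L * ℓ := by gcongr; linarith [hx.2]
  linarith [abs_sub_abs_le_abs_sub (f u) (f x), abs_sub_comm (f x) (f u)]

/-- Start at a maximum point `u` of `|q|` on `[-1 + 2ρ, 1 - 2ρ]`, `ρ = (16p²)⁻¹`: there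
`|q u| ≥ ‖q‖∞ / e`, and Bernstein's inequality gives `|q'| ≤ 4 (1 + e²) p² ‖q‖∞` on `[u, u + ρ]`. -/
lemma exists_Icc_forall_le_abs_eval (hq : q.natDegree ≤ p) (hp : 0 < p) {x₀ : ℝ}
    (hx₀ : x₀ ∈ Icc (-1 : ℝ) 1) (hmax : ∀ x ∈ Icc (-1 : ℝ) 1, |q.eval x| ≤ |q.eval x₀|) :
    ∃ u : ℝ, Icc u (u + (32 * Real.exp 1 * (1 + Real.exp 2) * p ^ 2)⁻¹) ⊆
        Icc (-1) (1 - (16 * p ^ 2 : ℝ)⁻¹) ∧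
      ∀ x ∈ Icc u (u + (32 * Real.exp 1 * (1 + Real.exp 2) * p ^ 2)⁻¹),
        |q.eval x₀| / (2 * Real.exp 1) ≤ |q.eval x| := by
  have hp' : (1 : ℝ) ≤ p := Nat.one_le_cast.mpr hp
  set M := |q.eval x₀|
  set ρ := (16 * p ^ 2 : ℝ)⁻¹
  set ℓ := (32 * Real.exp 1 * (1 + Real.exp 2) * p ^ 2 : ℝ)⁻¹
  have hρ : 0 < ρ := by positivity
  have hρ1 : ρ ≤ 1 / 16 := by
    rw [one_div]; exact inv_anti₀ (by norm_num) (by nlinarith)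
  have hℓρ : ℓ ≤ ρ :=
    inv_anti₀ (by positivity) (by gcongr; nlinarith [Real.add_one_le_exp 1, Real.exp_pos 2])
  have ha : (8 * p ^ 2 : ℝ)⁻¹ = 2 * ρ := by
    simp only [ρ, mul_inv]; ring
  obtain ⟨u, hu, humax⟩ := isCompact_Icc.exists_isMaxOn
    (nonempty_Icc.mpr (show -(1 - 2 * ρ) ≤ 1 - 2 * ρ by linarith))
    (continuous_abs.comp q.continuous).continuousOn
  have hMu : M ≤ Real.exp 1 * |q.eval u| := by
    refine abs_eval_le_exp_one_mul_of_le_on_Icc hq hp (fun x hx => ?_) hx₀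
    rw [ha] at hx
    exact humax hx
  have hJ : Icc u (u + ℓ) ⊆ Icc (-(1 - ρ)) (1 - ρ) :=
    Icc_subset_Icc (by linarith [hu.1]) (by linarith [hu.2])
  have hderiv : ∀ x ∈ Icc u (u + ℓ),
      |deriv (fun t => q.eval t) x| ≤ 4 * (1 + Real.exp 2) * p ^ 2 * M := fun x hx => by
    rw [Polynomial.deriv]
    exact abs_eval_derivative_le hq hp hmax (abs_le.mpr (hJ hx))
  refine ⟨u, hJ.trans (Icc_subset_Icc (by linarith) le_rfl), fun x hx => ?_⟩
  have hdrop : 4 * (1 + Real.exp 2) * p ^ 2 * M * ℓ = M / (8 * Real.exp 1) := by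
    simp only [ℓ]; field_simp; ring
  have hMu' : M / Real.exp 1 ≤ |q.eval u| := by rw [div_le_iff₀' (Real.exp_pos 1)]; exact hMu
  have hhalf : M / (2 * Real.exp 1) + M / (8 * Real.exp 1) = 5 / 8 * (M / Real.exp 1) := by
    field_simp; ring
  have hMe : 0 ≤ M / Real.exp 1 := by positivity
  linarith [le_abs_add_mul_of_abs_deriv_le q.differentiable hderiv hx]

section WeightedIntegral

variable {g : ℝ → ℝ} {α β γ : ℝ}

lemma continuous_one_sub_rpow_mul (hg : Continuous g) (hγ : 0 ≤ γ) :
    Continuous fun x : ℝ => (1 - x) ^ γ * g x :=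
  ((continuous_const.sub continuous_id).rpow_const fun _ => Or.inr hγ).mul hg

lemma integral_one_sub_rpow_mul_le_of_subset (hg : Continuous g) (hg0 : ∀ x, 0 ≤ g x)
    (hγ : 0 ≤ γ) {a b : ℝ} (ha : -1 ≤ a) (hab : a ≤ b) (hb : b ≤ 1) :
    ∫ x in a..b, (1 - x) ^ γ * g x ≤ ∫ x in (-1)..1, (1 - x) ^ γ * g x := by
  refine intervalIntegral.integral_mono_interval ha hab hb ?_
    ((continuous_one_sub_rpow_mul hg hγ).intervalIntegrable _ _)
  refine (ae_restrict_iff' measurableSet_Ioc).mpr (Filter.Eventually.of_forall fun x hx => ?_)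
  have : 0 ≤ 1 - x := by linarith [hx.2]
  exact mul_nonneg (Real.rpow_nonneg this γ) (hg0 x)

lemma rpow_le_rpow_sub_mul_rpow {δ t : ℝ} (hδ : 0 < δ) (hδt : δ ≤ t) (hαβ : α ≤ β) :
    t ^ α ≤ δ ^ (α - β) * t ^ β := by
  have ht : 0 < t := hδ.trans_le hδt
  calc t ^ α = t ^ (α - β) * t ^ β := by rw [← Real.rpow_add ht, sub_add_cancel]
    _ ≤ δ ^ (α - β) * t ^ β :=
      mul_le_mul_of_nonneg_right (Real.rpow_le_rpow_of_nonpos hδ hδt (sub_nonpos.mpr hαβ))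
        (Real.rpow_nonneg ht.le β)

lemma integral_one_sub_rpow_mul_le_rpow_mul (hg : Continuous g) (hg0 : ∀ x, 0 ≤ g x)
    (hα : 0 ≤ α) (hαβ : α ≤ β) {δ : ℝ} (hδ : 0 < δ) (hδ2 : δ ≤ 2) :
    ∫ x in (-1)..(1 - δ), (1 - x) ^ α * g x ≤
      δ ^ (α - β) * ∫ x in (-1)..1, (1 - x) ^ β * g x := by
  have hβ := hα.trans hαβ
  calc ∫ x in (-1)..(1 - δ), (1 - x) ^ α * g x
      ≤ ∫ x in (-1)..(1 - δ), δ ^ (α - β) * ((1 - x) ^ β * g x) := by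
        refine intervalIntegral.integral_mono_on (by linarith)
          ((continuous_one_sub_rpow_mul hg hα).intervalIntegrable _ _)
          (((continuous_one_sub_rpow_mul hg hβ).const_mul _).intervalIntegrable _ _)
          fun x hx => ?_
        rw [← mul_assoc]
        exact mul_le_mul_of_nonneg_right
          (rpow_le_rpow_sub_mul_rpow hδ (by linarith [hx.2]) hαβ) (hg0 x)
    _ = δ ^ (α - β) * ∫ x in (-1)..(1 - δ), (1 - x) ^ β * g x :=
        intervalIntegral.integral_const_mul _ _
    _ ≤ δ ^ (α - β) * ∫ x in (-1)..1, (1 - x) ^ β * g x := by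
        gcongr
        exact integral_one_sub_rpow_mul_le_of_subset hg hg0 hβ le_rfl (by linarith)
          (by linarith)

lemma integral_one_sub_rpow_mul_le_of_le (hg : Continuous g) (hg0 : ∀ x, 0 ≤ g x) (hα : 0 ≤ α)
    {δ N : ℝ} (hδ : 0 ≤ δ) (hN : ∀ x ∈ Icc (1 - δ) 1, g x ≤ N) :
    ∫ x in (1 - δ)..1, (1 - x) ^ α * g x ≤ δ ^ α * δ * N := by
  calc ∫ x in (1 - δ)..1, (1 - x) ^ α * g x ≤ ∫ _ in (1 - δ)..1, δ ^ α * N := by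
        refine intervalIntegral.integral_mono_on (by linarith)
          ((continuous_one_sub_rpow_mul hg hα).intervalIntegrable _ _)
          intervalIntegrable_const fun x hx => ?_
        have h1x : 0 ≤ 1 - x := by linarith [hx.2]
        exact mul_le_mul (Real.rpow_le_rpow h1x (by linarith [hx.1]) hα) (hN x hx) (hg0 x)
          (Real.rpow_nonneg hδ α)
    _ = δ ^ α * δ * N := by
        rw [intervalIntegral.integral_const, smul_eq_mul, sub_sub_cancel]; ring

end WeightedIntegral

/-- A weighted Nikolskii inequality. -/
lemma exists_sq_eval_le_mul_integral {β : ℝ} (hβ : 0 ≤ β) :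
    ∃ C > 0, ∀ p : ℕ, 0 < p → ∀ q : ℝ[X], q.natDegree ≤ p → ∀ y ∈ Icc (-1 : ℝ) 1,
      q.eval y ^ 2 ≤ C * (p : ℝ) ^ (2 * β + 2) * ∫ x in (-1)..1, (1 - x) ^ β * q.eval x ^ 2 := by
  refine ⟨128 * Real.exp 3 * (1 + Real.exp 2) * 16 ^ β, by positivity, fun p hp q hq y hy => ?_⟩
  have hp' : (0 : ℝ) < p := Nat.cast_pos.mpr hp
  obtain ⟨x₀, hx₀, hmax⟩ := isCompact_Icc.exists_isMaxOn
    (nonempty_Icc.mpr (show (-1 : ℝ) ≤ 1 by norm_num))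
    (continuous_abs.comp q.continuous).continuousOn
  obtain ⟨u, hsub, hlarge⟩ := exists_Icc_forall_le_abs_eval hq hp hx₀ fun x hx => hmax hx
  set m := |q.eval x₀| / (2 * Real.exp 1)
  set ρ := (16 * p ^ 2 : ℝ)⁻¹
  set ℓ := (32 * Real.exp 1 * (1 + Real.exp 2) * p ^ 2 : ℝ)⁻¹
  have hρ : 0 < ρ := by positivity
  have hu : u ≤ u + ℓ := by simp only [le_add_iff_nonneg_right]; positivity
  have hlow : ℓ * (ρ ^ β * m ^ 2) ≤ ∫ x in (-1)..1, (1 - x) ^ β * q.eval x ^ 2 := by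
    calc ℓ * (ρ ^ β * m ^ 2) = ∫ _ in u..u + ℓ, ρ ^ β * m ^ 2 := by
          rw [intervalIntegral.integral_const, add_sub_cancel_left, smul_eq_mul]
      _ ≤ ∫ x in u..u + ℓ, (1 - x) ^ β * q.eval x ^ 2 := by
        refine intervalIntegral.integral_mono_on hu intervalIntegrable_const
          ((continuous_one_sub_rpow_mul (q.continuous.pow 2) hβ).intervalIntegrable _ _)
          fun x hx => ?_
        have hρx : ρ ≤ 1 - x := by linarith [(hsub hx).2]
        have hmx : m ^ 2 ≤ q.eval x ^ 2 := by
          rw [← sq_abs (q.eval x)]; gcongr; exact hlarge x hx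
        exact mul_le_mul (Real.rpow_le_rpow hρ.le hρx hβ) hmx (by positivity)
          (Real.rpow_nonneg (hρ.le.trans hρx) _)
      _ ≤ ∫ x in (-1)..1, (1 - x) ^ β * q.eval x ^ 2 :=
        integral_one_sub_rpow_mul_le_of_subset (q.continuous.pow 2) (fun x => sq_nonneg _) hβ
          (hsub (left_mem_Icc.mpr hu)).1 hu (by linarith [(hsub (right_mem_Icc.mpr hu)).2])
  have hconst : 128 * Real.exp 3 * (1 + Real.exp 2) * 16 ^ β * (p : ℝ) ^ (2 * β + 2) *
      (ℓ * ρ ^ β) = (2 * Real.exp 1) ^ 2 := by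
    have hρβ : ρ ^ β = (16 ^ β * (p : ℝ) ^ (2 * β))⁻¹ := by
      rw [Real.inv_rpow (by positivity), Real.mul_rpow (by norm_num) (by positivity),
        ← Real.rpow_natCast_mul hp'.le, Nat.cast_ofNat]
    rw [hρβ, Real.rpow_add hp', Real.rpow_two, show Real.exp 3 = Real.exp 1 ^ 3 by
      rw [← Real.exp_nat_mul]; norm_num]
    have : (0 : ℝ) < 16 ^ β := by positivity
    have : (0 : ℝ) < p ^ (2 * β) := by positivity
    simp only [ℓ]
    field_simp
    ring
  calc q.eval y ^ 2 = |q.eval y| ^ 2 := (sq_abs _).symm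
    _ ≤ |q.eval x₀| ^ 2 := pow_le_pow_left₀ (abs_nonneg _) (hmax hy) 2
    _ = (2 * Real.exp 1) ^ 2 * m ^ 2 := by simp only [m]; field_simp
    _ = 128 * Real.exp 3 * (1 + Real.exp 2) * 16 ^ β * (p : ℝ) ^ (2 * β + 2) *
          (ℓ * (ρ ^ β * m ^ 2)) := by rw [← hconst]; ring
    _ ≤ _ := by gcongr

lemma exists_integral_le_mul_integral {α β : ℝ} (hα : 0 ≤ α) (hαβ : α ≤ β) :
    ∃ c > 0, ∀ p : ℕ, 0 < p → ∀ q : ℝ[X], q.natDegree ≤ p →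
      ∫ x in (-1)..1, (1 - x) ^ α * q.eval x ^ 2 ≤
        c * (p : ℝ) ^ (2 * (β - α)) * ∫ x in (-1)..1, (1 - x) ^ β * q.eval x ^ 2 := by
  obtain ⟨C, hC, hnikolskii⟩ := exists_sq_eval_le_mul_integral (hα.trans hαβ)
  refine ⟨1 + C, by positivity, fun p hp q hq => ?_⟩
  have hp' : (1 : ℝ) ≤ p := Nat.one_le_cast.mpr hp
  set δ := (p : ℝ) ^ (-2 : ℝ)
  set A := ∫ x in (-1)..1, (1 - x) ^ β * q.eval x ^ 2
  have hδ : 0 < δ := by positivity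
  have hδ1 : δ ≤ 1 := Real.rpow_le_one_of_one_le_of_nonpos hp' (by norm_num)
  have hδleft : δ ^ (α - β) = (p : ℝ) ^ (2 * (β - α)) := by
    rw [← Real.rpow_mul (by positivity)]; congr 1; ring
  have hδright : δ ^ α * δ * (C * (p : ℝ) ^ (2 * β + 2)) = C * (p : ℝ) ^ (2 * (β - α)) := by
    rw [← Real.rpow_add_one hδ.ne', ← Real.rpow_mul (by positivity), mul_left_comm,
      ← Real.rpow_add (by positivity)]
    congr 2; ring
  have hsq : Continuous fun x => q.eval x ^ 2 := q.continuous.pow 2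
  have hsq0 : ∀ x, 0 ≤ q.eval x ^ 2 := fun x => sq_nonneg _
  rw [← intervalIntegral.integral_add_adjacent_intervals (b := 1 - δ)
    ((continuous_one_sub_rpow_mul hsq hα).intervalIntegrable _ _)
    ((continuous_one_sub_rpow_mul hsq hα).intervalIntegrable _ _)]
  calc _ ≤ δ ^ (α - β) * A + δ ^ α * δ * (C * (p : ℝ) ^ (2 * β + 2) * A) :=
        add_le_add (integral_one_sub_rpow_mul_le_rpow_mul hsq hsq0 hα hαβ hδ (by linarith))
          (integral_one_sub_rpow_mul_le_of_le hsq hsq0 hα hδ.le fun x hx =>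
            hnikolskii p hp q hq x ⟨by linarith [hx.1], hx.2⟩)
    _ = (1 + C) * (p : ℝ) ^ (2 * (β - α)) * A := by
        rw [← mul_assoc, hδright, hδleft]; ring

lemma integral_one_add_rpow_mul_sq_eval (q : ℝ[X]) (γ : ℝ) :
    ∫ x in (-1)..1, (1 + x) ^ γ * q.eval x ^ 2 =
      ∫ x in (-1)..1, (1 - x) ^ γ * (q.comp (-X)).eval x ^ 2 := by
  simpa [sub_eq_add_neg] using
    (intervalIntegral.integral_comp_neg (a := -1) (b := 1)
      fun x => (1 + x) ^ γ * q.eval x ^ 2).symm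

end OneSidedBubble

open OneSidedBubble in
/-- $hp$-explicit 1D polynomial inverse estimates with the
one-sided bubble weights $(1-x)$ and $(1+x)$ (second pair of inequalities of
Lemma 3.3 of the paper). -/
theorem one_sided_bubble_inverse_estimates_1D :
    ∀ α β : ℝ, 0 ≤ α → α ≤ β →
      ∃ c : ℝ, 0 < c ∧
        ∀ p : ℕ, 1 ≤ p → ∀ q : Polynomial ℝ, q.natDegree ≤ p →
          (∫ x in Set.Icc (-1 : ℝ) 1, (1 - x) ^ α * (q.eval x) ^ 2 ≤
            c * (p : ℝ) ^ (2 * (β - α)) *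
              ∫ x in Set.Icc (-1 : ℝ) 1, (1 - x) ^ β * (q.eval x) ^ 2) ∧
          (∫ x in Set.Icc (-1 : ℝ) 1, (1 + x) ^ α * (q.eval x) ^ 2 ≤
            c * (p : ℝ) ^ (2 * (β - α)) *
              ∫ x in Set.Icc (-1 : ℝ) 1, (1 + x) ^ β * (q.eval x) ^ 2) := by
  intro α β hα hαβ
  obtain ⟨c, hc, hestimate⟩ := exists_integral_le_mul_integral hα hαβ
  refine ⟨c, hc, fun p hp q hq => ?_⟩
  simp only [integral_Icc_eq_integral_Ioc,
    ← intervalIntegral.integral_of_le (show (-1 : ℝ) ≤ 1 by norm_num)]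
  refine ⟨hestimate p hp q hq, ?_⟩
  rw [integral_one_add_rpow_mul_sq_eval, integral_one_add_rpow_mul_sq_eval]
  exact hestimate p hp _ (by simpa [natDegree_comp] using hq)
end

section
/- There exists a constant c > 0 such that for every integer p ≥ 1 and every real polynomial q in two variables of total degree at most p, ∫_0^1 q(x,0)² dx ≤ c · p² · ∫_T q(x,y)² dx dy, where T = {(x,y) ∈ ℝ² : x ≥ 0, y ≥ 0, x + y ≤ 1}. -/
open MeasureTheory

open Polynomial

/-- The reference triangle `T = {(x,y) : x ≥ 0, y ≥ 0, x + y ≤ 1}`. -/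
def refTriangle : Set (ℝ × ℝ) := {z | 0 ≤ z.1 ∧ 0 ≤ z.2 ∧ z.1 + z.2 ≤ 1}

noncomputable def pint (f : Polynomial ℝ) : ℝ := ∫ t in (0:ℝ)..1, f.eval t

lemma pint_intable (f : Polynomial ℝ) : IntervalIntegrable (fun t => f.eval t) volume 0 1 :=
  (f.continuous_aeval).intervalIntegrable _ _

lemma pint_add (f g : Polynomial ℝ) : pint (f + g) = pint f + pint g := by
  simp only [pint, eval_add]
  exact intervalIntegral.integral_add (pint_intable f) (pint_intable g)

lemma pint_smul (c : ℝ) (f : Polynomial ℝ) : pint (c • f) = c * pint f := by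
  simp only [pint, eval_smul, smul_eq_mul]
  exact intervalIntegral.integral_const_mul c _

lemma pint_deriv (f : Polynomial ℝ) : pint (derivative f) = f.eval 1 - f.eval 0 := by
  have : ∀ x ∈ Set.uIcc (0:ℝ) 1, HasDerivAt (fun t => f.eval t) ((derivative f).eval x) x :=
    fun x _ => f.hasDerivAt x
  simpa [pint] using intervalIntegral.integral_eq_sub_of_hasDerivAt this
    (pint_intable (derivative f))

lemma pint_ibp (f g : Polynomial ℝ) :
    pint (derivative f * g) =
      (f * g).eval 1 - (f * g).eval 0 - pint (f * derivative g) := by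
  have h := pint_deriv (f * g)
  rw [derivative_mul, pint_add] at h
  linarith

noncomputable def RR (n : ℕ) : Polynomial ℝ := (X * (1 - X)) ^ n
noncomputable def LL (n : ℕ) : Polynomial ℝ := derivative^[n] (RR n)

lemma RR_comp (n : ℕ) : (RR n).comp (1 - X) = RR n := by
  simp [RR, mul_comp, pow_comp, sub_comp, mul_comm]

lemma X_pow_dvd_RR (n : ℕ) : (X : Polynomial ℝ) ^ n ∣ RR n := by
  simpa [RR, mul_pow] using dvd_mul_right ((X:Polynomial ℝ)^n) ((1-X)^n)

lemma eval_zero_iter_deriv_RR {n k : ℕ} (hk : k < n) :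
    (derivative^[k] (RR n)).eval 0 = 0 := by
  have h : (X : Polynomial ℝ) ^ (n - k) ∣ derivative^[k] (RR n) :=
    pow_sub_dvd_iterate_derivative_of_pow_dvd k (X_pow_dvd_RR n)
  obtain ⟨g, hg⟩ := h
  have hnk : n - k ≠ 0 := Nat.sub_ne_zero_of_lt hk
  simp [hg, eval_pow, zero_pow hnk]

lemma eval_one_iter_deriv_RR {n k : ℕ} (hk : k < n) :
    (derivative^[k] (RR n)).eval 1 = 0 := by
  have h := congrArg (derivative^[k]) (RR_comp n)
  rw [iterate_derivative_comp_one_sub_X] at h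
  have := congrArg (eval (1:ℝ)) h
  simp only [eval_mul, eval_pow, eval_neg, eval_one, eval_comp, eval_sub, eval_X] at this
  rw [show ((1:ℝ) - 1) = 0 by ring, eval_zero_iter_deriv_RR hk] at this
  simpa using this.symm

lemma orth_aux (n : ℕ) : ∀ k ≤ n, ∀ q : Polynomial ℝ,
    pint (derivative^[k] (RR n) * q) = (-1)^k * pint (RR n * derivative^[k] q) := by
  intro k hk
  induction k with
  | zero => intro q; simp
  | succ k ih =>
    intro q
    have hk' : k ≤ n := Nat.le_of_succ_le hk
    have hklt : k < n := hk
    rw [Function.iterate_succ_apply']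
    rw [pint_ibp (derivative^[k] (RR n)) q]
    rw [eval_mul, eval_mul, eval_zero_iter_deriv_RR hklt, eval_one_iter_deriv_RR hklt]
    rw [ih hk' (derivative q), ← Function.iterate_succ_apply]
    ring

lemma orth (n : ℕ) {q : Polynomial ℝ} (hq : q.natDegree < n) : pint (LL n * q) = 0 := by
  rw [LL, orth_aux n n le_rfl q, iterate_derivative_eq_zero hq, mul_zero]
  simp [pint]

lemma coeff_RR_n (n : ℕ) : (RR n).coeff n = 1 := by
  have : RR n = X ^ n * (1 - X) ^ n := by rw [RR, mul_pow]
  rw [this]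
  have := Polynomial.coeff_X_pow_mul ((1 - X : Polynomial ℝ) ^ n) n 0
  simpa [coeff_zero_eq_eval_zero] using this

lemma coeff_RR_succ (n : ℕ) : (RR n).coeff (n + 1) = -(n : ℝ) := by
  have : RR n = X ^ n * (1 - X) ^ n := by rw [RR, mul_pow]
  rw [this]
  have h := Polynomial.coeff_X_pow_mul ((1 - X : Polynomial ℝ) ^ n) n 1
  rw [show 1 + n = n + 1 from add_comm 1 n] at h
  rw [h]
  have h2 : ((1 - X : Polynomial ℝ) ^ n).coeff 1 =
      (derivative ((1 - X : Polynomial ℝ) ^ n)).eval 0 := by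
    rw [← coeff_zero_eq_eval_zero, coeff_derivative]
    simp
  rw [h2, derivative_pow]
  simp

lemma eval_zero_LL (n : ℕ) : (LL n).eval 0 = (n.factorial : ℝ) := by
  rw [← coeff_zero_eq_eval_zero, LL, coeff_iterate_derivative]
  rw [show 0 + n = n from zero_add n, coeff_RR_n]
  simp [Nat.descFactorial_self]

lemma eval_one_LL (n : ℕ) : (LL n).eval 1 = (-1)^n * (n.factorial : ℝ) := by
  have h := congrArg (derivative^[n]) (RR_comp n)
  rw [iterate_derivative_comp_one_sub_X] at h
  have := congrArg (eval (1:ℝ)) h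
  simp only [eval_mul, eval_pow, eval_neg, eval_one, eval_comp, eval_sub, eval_X] at this
  rw [show ((1:ℝ) - 1) = 0 by ring] at this
  rw [← LL] at this
  rw [← this, eval_zero_LL]

lemma coeff_LL_one (n : ℕ) : (LL n).coeff 1 = -((n+1).factorial : ℝ) * n := by
  rw [LL, coeff_iterate_derivative, show 1 + n = n + 1 from add_comm 1 n, coeff_RR_succ]
  have hdf : (n+1).descFactorial n = (n+1).factorial := by
    have h1 : (n+1).descFactorial (n+1) = (n+1-n) * (n+1).descFactorial n :=
      Nat.descFactorial_succ (n+1) n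
    rw [Nat.descFactorial_self, Nat.succ_sub le_rfl, Nat.sub_self] at h1
    omega
  rw [hdf]
  push_cast
  ring

lemma natDegree_LL (n : ℕ) : (LL n).natDegree ≤ n := by
  have h1 := Polynomial.natDegree_iterate_derivative (RR n) n
  have hd : (X * (1 - X) : Polynomial ℝ).natDegree ≤ 2 := by compute_degree
  have h3 : (RR n).natDegree ≤ n * (X * (1 - X) : Polynomial ℝ).natDegree := by
    simpa [RR] using Polynomial.natDegree_pow_le (p := (X * (1 - X) : Polynomial ℝ)) (n := n)
  have h2 : (RR n).natDegree ≤ 2 * n :=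
    h3.trans (by calc n * (X * (1 - X) : Polynomial ℝ).natDegree ≤ n * 2 :=
                      Nat.mul_le_mul_left n hd
                  _ = 2 * n := Nat.mul_comm n 2)
  rw [LL]
  omega

noncomputable def GG (p : ℕ) : Polynomial ℝ :=
  (1 / (2 * (p.factorial : ℝ))) • LL p + (1 / (2 * ((p+1).factorial : ℝ))) • LL (p+1)

noncomputable def KK (p : ℕ) : Polynomial ℝ := -derivative (GG p)

lemma eval_zero_GG (p : ℕ) : (GG p).eval 0 = 1 := by
  have h0 := p.factorial_pos
  have h1 := (p+1).factorial_pos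
  simp only [GG, eval_add, eval_smul, eval_zero_LL, smul_eq_mul]
  field_simp
  ring

lemma eval_one_GG (p : ℕ) : (GG p).eval 1 = 0 := by
  have h0 := p.factorial_pos
  have h1 := (p+1).factorial_pos
  simp only [GG, eval_add, eval_smul, eval_one_LL, smul_eq_mul]
  have hf0 : (p.factorial : ℝ) ≠ 0 := by positivity
  have hf1 : ((p+1).factorial : ℝ) ≠ 0 := by positivity
  field_simp
  ring

lemma eval_zero_KK (p : ℕ) : (KK p).eval 0 = ((p:ℝ) + 1) ^ 2 := by
  have h1 : (KK p).eval 0 = -((GG p).coeff 1) := by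
    rw [KK, eval_neg, ← coeff_zero_eq_eval_zero, coeff_derivative]
    simp
  rw [h1]
  simp only [GG, coeff_add, coeff_smul, coeff_LL_one, smul_eq_mul]
  have hf0 : (p.factorial : ℝ) ≠ 0 := by positivity
  have hf1 : ((p+1).factorial : ℝ) ≠ 0 := by positivity
  have e1 : ((p+1).factorial : ℝ) = (p+1) * p.factorial := by
    rw [Nat.factorial_succ]; push_cast; ring
  have e2 : ((p+2).factorial : ℝ) = (p+2) * (p+1) * p.factorial := by
    rw [show p + 2 = (p+1)+1 from rfl, Nat.factorial_succ, Nat.factorial_succ]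
    push_cast; ring
  rw [show p + 1 + 1 = p + 2 from rfl, e1, e2]
  field_simp
  push_cast; ring

lemma natDegree_KK (p : ℕ) : (KK p).natDegree ≤ p := by
  have hG : (GG p).natDegree ≤ p + 1 := by
    refine (Polynomial.natDegree_add_le _ _).trans ?_
    have a1 : ((1 / (2 * (p.factorial : ℝ))) • LL p).natDegree ≤ p + 1 :=
      (Polynomial.natDegree_smul_le _ _).trans ((natDegree_LL p).trans (Nat.le_succ p))
    have a2 : ((1 / (2 * ((p+1).factorial : ℝ))) • LL (p+1)).natDegree ≤ p + 1 :=
      (Polynomial.natDegree_smul_le _ _).trans (natDegree_LL (p+1))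
    omega
  have := Polynomial.natDegree_derivative_le (GG p)
  rw [KK, natDegree_neg]
  omega

lemma pint_GG_mul {q : Polynomial ℝ} (p : ℕ) (hq : q.natDegree < p) :
    pint (GG p * q) = 0 := by
  rw [GG, add_mul, smul_mul_assoc, smul_mul_assoc, pint_add, pint_smul, pint_smul]
  rw [orth p hq, orth (p+1) (hq.trans (Nat.lt_succ_self p))]
  ring

lemma kernel_property (p : ℕ) {q : Polynomial ℝ} (hq : q.natDegree ≤ p) :
    pint (KK p * q) = q.eval 0 := by
  have hibp := pint_ibp (GG p) q
  have hKq : pint (KK p * q) = -pint (derivative (GG p) * q) := by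
    rw [KK, neg_mul]
    simp only [pint]
    rw [← intervalIntegral.integral_neg]
    congr 1; funext t; simp
  rw [hKq, hibp]
  have hGq' : pint (GG p * derivative q) = 0 := by
    by_cases hq0 : derivative q = 0
    · rw [hq0, mul_zero]; simp [pint]
    · apply pint_GG_mul
      have hne : q.natDegree ≠ 0 := by
        intro h
        obtain ⟨a, rfl⟩ := Polynomial.natDegree_eq_zero.mp h
        simp at hq0
      exact lt_of_lt_of_le (Polynomial.natDegree_derivative_lt hne) hq
  rw [hGq', eval_mul, eval_mul, eval_zero_GG, eval_one_GG]
  ring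

lemma pint_sq_nonneg (f : Polynomial ℝ) : 0 ≤ pint (f * f) := by
  apply intervalIntegral.integral_nonneg (by norm_num)
  intro u _
  simpa [eval_mul] using mul_self_nonneg (f.eval u)

lemma one_dim_trace (p : ℕ) {q : Polynomial ℝ} (hq : q.natDegree ≤ p) :
    (q.eval 0) ^ 2 ≤ ((p:ℝ)+1)^2 * pint (q * q) := by
  set A : ℝ := ((p:ℝ)+1)^2 with hA
  set B : ℝ := q.eval 0 with hB
  set C : ℝ := pint (q * q) with hC
  have hKK : pint (KK p * KK p) = A := by
    rw [kernel_property p (natDegree_KK p), eval_zero_KK]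
  have hKq : pint (KK p * q) = B := kernel_property p hq
  have key : ∀ lam : ℝ, 0 ≤ A - 2 * lam * B + lam ^ 2 * C := by
    intro lam
    have hexp : (KK p - lam • q) * (KK p - lam • q)
        = KK p * KK p + (-(2*lam)) • (KK p * q) + (lam^2) • (q * q) := by
      simp only [Polynomial.smul_eq_C_mul, map_neg, map_mul, map_pow, map_ofNat]
      ring
    have hnn := pint_sq_nonneg (KK p - lam • q)
    rw [hexp, pint_add, pint_add, pint_smul, pint_smul, hKK, hKq] at hnn
    linarith
  have hCnn : 0 ≤ C := pint_sq_nonneg q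
  have hAnn : 0 ≤ A := by positivity
  rcases eq_or_lt_of_le hCnn with hC0 | hCpos
  · have hB0 : B = 0 := by
      by_contra hB0
      have h := key ((A+1)/(2*B))
      rw [← hC0] at h
      have h2 : 2 * ((A+1)/(2*B)) * B = A + 1 := by field_simp
      nlinarith
    rw [hB0, ← hC0]
    norm_num
  · have := key (B / C)
    have h2 : 0 ≤ A - B^2 / C := by
      have : 2 * (B/C) * B - (B/C)^2 * C = B^2/C := by field_simp; ring
      linarith [key (B/C)]
    calc B^2 = B^2/C * C := by field_simp
    _ ≤ A * C := by
      apply mul_le_mul_of_nonneg_right _ hCnn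
      linarith

lemma weight_intable (q : Polynomial ℝ) (a b : ℝ) :
    IntervalIntegrable (fun u => (q.eval u)^2 * (1 - u)) volume a b := by
  apply Continuous.intervalIntegrable
  have := q.continuous
  fun_prop

lemma one_dim_weighted (p : ℕ) (hp : 1 ≤ p) {q : Polynomial ℝ} (hq : q.natDegree ≤ p) :
    (q.eval 0) ^ 2 ≤ 16 * (p:ℝ)^2 * ∫ t in (0:ℝ)..1, (q.eval t)^2 * (1 - t) := by
  set r : Polynomial ℝ := q.comp (Polynomial.C (2⁻¹ : ℝ) * X) with hr
  have hrdeg : r.natDegree ≤ p := by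
    rw [hr, Polynomial.natDegree_comp]
    have h1 : (Polynomial.C (2⁻¹ : ℝ) * X).natDegree ≤ 1 := by compute_degree
    calc q.natDegree * (Polynomial.C (2⁻¹ : ℝ) * X).natDegree ≤ q.natDegree * 1 :=
          Nat.mul_le_mul_left _ h1
      _ ≤ p := by omega
  have hr0 : r.eval 0 = q.eval 0 := by simp [hr, eval_comp]
  have h1 := one_dim_trace p hrdeg
  rw [hr0] at h1
  -- pint (r*r) = ∫ (q.eval (2⁻¹ * t))^2
  have h2 : pint (r * r) = ∫ t in (0:ℝ)..1, (q.eval (2⁻¹ * t))^2 := by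
    simp only [pint, eval_mul, hr, eval_comp, eval_C, eval_X, eval_mul]
    congr 1; funext t; ring
  have h3 : (∫ t in (0:ℝ)..1, (q.eval (2⁻¹ * t))^2)
      = 2 * ∫ u in (0:ℝ)..2⁻¹, (q.eval u)^2 := by
    have := intervalIntegral.integral_comp_mul_left (a := (0:ℝ)) (b := 1)
      (f := fun u => (q.eval u)^2) (c := (2⁻¹:ℝ)) (by norm_num)
    rw [this]
    norm_num
  have h4 : (∫ u in (0:ℝ)..2⁻¹, (q.eval u)^2)
      ≤ 2 * ∫ u in (0:ℝ)..2⁻¹, (q.eval u)^2 * (1 - u) := by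
    rw [← intervalIntegral.integral_const_mul]
    apply intervalIntegral.integral_mono_on (by norm_num)
    · exact ((q.continuous.pow 2)).intervalIntegrable _ _
    · exact ((weight_intable q 0 2⁻¹).const_mul 2)
    · intro u hu
      rcases hu with ⟨hu0, hu1⟩
      nlinarith [sq_nonneg (q.eval u)]
  have h5 : (∫ u in (0:ℝ)..2⁻¹, (q.eval u)^2 * (1 - u))
      ≤ ∫ u in (0:ℝ)..1, (q.eval u)^2 * (1 - u) := by
    have hsplit := intervalIntegral.integral_add_adjacent_intervals
      (weight_intable q 0 2⁻¹) (weight_intable q 2⁻¹ 1)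
    have hnn : 0 ≤ ∫ u in (2⁻¹:ℝ)..1, (q.eval u)^2 * (1 - u) := by
      apply intervalIntegral.integral_nonneg (by norm_num)
      intro u hu
      rcases hu with ⟨hu0, hu1⟩
      nlinarith [sq_nonneg (q.eval u)]
    linarith
  have hnnI : 0 ≤ ∫ u in (0:ℝ)..1, (q.eval u)^2 * (1 - u) := by
    apply intervalIntegral.integral_nonneg (by norm_num)
    intro u hu
    rcases hu with ⟨hu0, hu1⟩
    nlinarith [sq_nonneg (q.eval u)]
  have hp4 : ((p:ℝ)+1)^2 ≤ 4 * (p:ℝ)^2 := by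
    have : (1:ℝ) ≤ (p:ℝ) := by exact_mod_cast hp
    nlinarith
  calc (q.eval 0)^2 ≤ ((p:ℝ)+1)^2 * pint (r * r) := h1
    _ = ((p:ℝ)+1)^2 * (2 * ∫ u in (0:ℝ)..2⁻¹, (q.eval u)^2) := by rw [h2, h3]
    _ ≤ ((p:ℝ)+1)^2 * (4 * ∫ u in (0:ℝ)..1, (q.eval u)^2 * (1 - u)) := by
        have hAnn : (0:ℝ) ≤ ((p:ℝ)+1)^2 := by positivity
        apply mul_le_mul_of_nonneg_left _ hAnn
        linarith
    _ ≤ 16 * (p:ℝ)^2 * ∫ t in (0:ℝ)..1, (q.eval t)^2 * (1 - t) := by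
        nlinarith

noncomputable def phi (q : MvPolynomial (Fin 2) ℝ) (x : ℝ) : Polynomial ℝ :=
  MvPolynomial.aeval ![Polynomial.C x * (1 - Polynomial.X), Polynomial.X] q

lemma mv_aeval_eq_eval (v : Fin 2 → ℝ) (q : MvPolynomial (Fin 2) ℝ) :
    MvPolynomial.aeval v q = MvPolynomial.eval v q := by
  rw [← MvPolynomial.coe_aeval_eq_eval]; rfl

lemma eval_phi (q : MvPolynomial (Fin 2) ℝ) (x t : ℝ) :
    (phi q x).eval t = MvPolynomial.eval ![x * (1 - t), t] q := by
  have h := congrArg (fun (g : MvPolynomial (Fin 2) ℝ →ₐ[ℝ] ℝ) => g q)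
    (MvPolynomial.comp_aeval (φ := Polynomial.aeval (t:ℝ))
      (f := ![Polynomial.C x * (1 - Polynomial.X), Polynomial.X]))
  simp only [AlgHom.coe_comp, Function.comp_apply] at h
  calc (phi q x).eval t = Polynomial.aeval t (phi q x) :=
        (congrFun (Polynomial.coe_aeval_eq_eval t) _).symm
    _ = MvPolynomial.aeval
          (fun i => Polynomial.aeval t (![Polynomial.C x * (1 - Polynomial.X), Polynomial.X] i)) q := h
    _ = MvPolynomial.eval ![x * (1 - t), t] q := by
        have hg : (fun i => Polynomial.aeval t
              (![Polynomial.C x * (1 - Polynomial.X), Polynomial.X] i)) = ![x * (1 - t), t] := by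
          funext i
          fin_cases i <;> simp [Polynomial.coe_aeval_eq_eval]
        rw [hg, mv_aeval_eq_eval]

lemma natDegree_phi (q : MvPolynomial (Fin 2) ℝ) (x : ℝ) :
    (phi q x).natDegree ≤ q.totalDegree := by
  rw [phi]
  conv_lhs => rw [← q.support_sum_monomial_coeff]
  rw [map_sum]
  apply Polynomial.natDegree_sum_le_of_forall_le
  intro m hm
  rw [MvPolynomial.aeval_monomial]
  refine (Polynomial.natDegree_mul_le).trans ?_
  have h0 : (algebraMap ℝ (Polynomial ℝ) (MvPolynomial.coeff m q)).natDegree = 0 := by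
    simp [Polynomial.natDegree_C]
  rw [h0, zero_add]
  have hdeg1 : ∀ i : Fin 2, (![Polynomial.C x * (1 - Polynomial.X), Polynomial.X] i).natDegree ≤ 1 := by
    intro i
    fin_cases i
    · simp only [Matrix.cons_val_zero]
      refine (Polynomial.natDegree_mul_le).trans ?_
      have : (1 - Polynomial.X : Polynomial ℝ).natDegree ≤ 1 :=
        (Polynomial.natDegree_sub_le _ _).trans (by simp)
      simp only [Polynomial.natDegree_C]
      omega
    · simp only [Matrix.cons_val_one, Matrix.head_cons]
      exact Polynomial.natDegree_X_le
  calc (m.prod fun i k => ![Polynomial.C x * (1 - Polynomial.X), Polynomial.X] i ^ k).natDegree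
      ≤ ∑ i ∈ m.support, ((![Polynomial.C x * (1 - Polynomial.X), Polynomial.X] i) ^ (m i)).natDegree := by
        rw [Finsupp.prod]
        exact Polynomial.natDegree_prod_le _ _
    _ ≤ ∑ i ∈ m.support, m i := by
        apply Finset.sum_le_sum
        intro i _
        refine (Polynomial.natDegree_pow_le).trans ?_
        calc m i * (![Polynomial.C x * (1 - Polynomial.X), Polynomial.X] i).natDegree
            ≤ m i * 1 := Nat.mul_le_mul_left _ (hdeg1 i)
          _ = m i := Nat.mul_one _
    _ = m.sum fun _ e => e := by rw [Finsupp.sum]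
    _ ≤ q.totalDegree := MvPolynomial.le_totalDegree hm

section TwoDim
variable (q : MvPolynomial (Fin 2) ℝ)

noncomputable def QQ (x y : ℝ) : ℝ := (MvPolynomial.eval ![x, y] q) ^ 2
noncomputable def FF (x t : ℝ) : ℝ := QQ q (x * (1 - t)) t * (1 - t)

lemma contV : Continuous fun z : ℝ × ℝ => (![z.1, z.2] : Fin 2 → ℝ) := by
  apply continuous_pi
  intro i
  fin_cases i
  · simpa using continuous_fst
  · simpa using continuous_snd

lemma contQQ : Continuous fun z : ℝ × ℝ => QQ q z.1 z.2 := by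
  have h := MvPolynomial.continuous_eval (p := q)
  exact ((h.comp (contV)).pow 2)

lemma contFF : Continuous fun z : ℝ × ℝ => FF q z.1 z.2 := by
  have h1 : Continuous fun z : ℝ × ℝ => (z.1 * (1 - z.2), z.2) := by fun_prop
  exact (((contQQ q).comp h1).mul (by fun_prop))

lemma pointwise_bound (p : ℕ) (hp : 1 ≤ p) (hdeg : q.totalDegree ≤ p) (x : ℝ) :
    QQ q x 0 ≤ 16 * (p:ℝ)^2 * ∫ t in (0:ℝ)..1, FF q x t := by
  have hdq : (phi q x).natDegree ≤ p := (natDegree_phi q x).trans hdeg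
  have h := one_dim_weighted p hp hdq
  have h0 : (phi q x).eval 0 = MvPolynomial.eval ![x, 0] q := by
    rw [eval_phi]
    norm_num
  have hint : ∀ t : ℝ, ((phi q x).eval t)^2 * (1 - t) = FF q x t := by
    intro t
    rw [eval_phi, FF, QQ]
  rw [h0] at h
  calc QQ q x 0 = ((MvPolynomial.eval ![x,0] q))^2 := rfl
    _ ≤ 16 * (p:ℝ)^2 * ∫ t in (0:ℝ)..1, ((phi q x).eval t)^2 * (1 - t) := h
    _ = 16 * (p:ℝ)^2 * ∫ t in (0:ℝ)..1, FF q x t := by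
        congr 1
        apply intervalIntegral.integral_congr
        intro t _
        exact hint t

end TwoDim

lemma refTriangle_closed : IsClosed refTriangle := by
  have h1 : IsClosed {z : ℝ × ℝ | 0 ≤ z.1} := isClosed_le continuous_const continuous_fst
  have h2 : IsClosed {z : ℝ × ℝ | 0 ≤ z.2} := isClosed_le continuous_const continuous_snd
  have h3 : IsClosed {z : ℝ × ℝ | z.1 + z.2 ≤ 1} :=
    isClosed_le (continuous_fst.add continuous_snd) continuous_const
  have : refTriangle = {z : ℝ × ℝ | 0 ≤ z.1} ∩ ({z : ℝ × ℝ | 0 ≤ z.2} ∩ {z : ℝ × ℝ | z.1 + z.2 ≤ 1}) := by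
    ext z; simp [refTriangle, Set.mem_inter_iff, and_assoc]
  rw [this]
  exact h1.inter (h2.inter h3)

lemma refTriangle_meas : MeasurableSet refTriangle := refTriangle_closed.measurableSet

lemma refTriangle_subset : refTriangle ⊆ Set.Icc ((0:ℝ), (0:ℝ)) (1, 1) := by
  rintro ⟨a, b⟩ ⟨h1, h2, h3⟩
  simp only [Set.mem_Icc, Prod.mk_le_mk]
  refine ⟨⟨h1, h2⟩, ?_, ?_⟩ <;> dsimp at * <;> linarith

lemma refTriangle_compact : IsCompact refTriangle :=
  IsCompact.of_isClosed_subset isCompact_Icc refTriangle_closed refTriangle_subset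

section Assembly
variable (q : MvPolynomial (Fin 2) ℝ)

noncomputable def Smu : Measure ℝ := volume.restrict (Set.Ioc (0:ℝ) 1)

instance : SFinite Smu := by
  show SFinite (volume.restrict (Set.Ioc (0:ℝ) 1)); infer_instance

instance : IsFiniteMeasure Smu := by
  show IsFiniteMeasure (volume.restrict (Set.Ioc (0:ℝ) 1))
  constructor
  simp [Measure.restrict_apply_univ]

lemma hFFint : Integrable (Function.uncurry (FF q)) ((Smu).prod (Smu)) := by
  rw [Smu, Measure.prod_restrict]
  have hsub : Set.Ioc (0:ℝ) 1 ×ˢ Set.Ioc (0:ℝ) 1 ⊆ Set.Icc ((0:ℝ),(0:ℝ)) ((1:ℝ),(1:ℝ)) := by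
    rw [← Set.Icc_prod_Icc]
    exact Set.prod_mono Set.Ioc_subset_Icc_self Set.Ioc_subset_Icc_self
  have hbase : IntegrableOn (Function.uncurry (FF q))
      (Set.Icc ((0:ℝ),(0:ℝ)) ((1:ℝ),(1:ℝ))) (volume.prod volume) := by
    rw [← Measure.volume_eq_prod]
    exact (contFF q).continuousOn.integrableOn_compact isCompact_Icc
  exact hbase.mono_set hsub

lemma hQ0int : Integrable (fun x => QQ q x 0) Smu := by
  rw [Smu]
  have : Continuous fun x : ℝ => QQ q x 0 := by
    have hv : Continuous fun x : ℝ => (![x, (0:ℝ)] : Fin 2 → ℝ) := by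
      apply continuous_pi; intro i; fin_cases i
      · simpa using continuous_id'
      · simpa using continuous_const
    exact ((MvPolynomial.continuous_eval (p := q)).comp hv).pow 2
  exact ((this.continuousOn.integrableOn_compact (isCompact_Icc (a := (0:ℝ)) (b := 1)))).mono_set
    Set.Ioc_subset_Icc_self

lemma claimC : ∀ t ∈ Set.Ioc (0:ℝ) 1,
    (∫ x, FF q x t ∂Smu) = ∫ u in Set.Ioc (0:ℝ) (1 - t), QQ q u t := by
  intro t ht
  by_cases ht1 : t = 1
  · subst ht1
    simp [FF]
  · have htlt : t < 1 := lt_of_le_of_ne ht.2 ht1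
    have h1t : (1:ℝ) - t ≠ 0 := by linarith
    have e1 : (∫ x, FF q x t ∂Smu) = ∫ x in (0:ℝ)..1, FF q x t := by
      rw [intervalIntegral.integral_of_le zero_le_one, Smu]
    rw [e1]
    have efun : (fun x => FF q x t) = fun x => QQ q (x * (1 - t)) t * (1 - t) := rfl
    have e2 : (∫ x in (0:ℝ)..1, FF q x t)
        = (∫ x in (0:ℝ)..1, QQ q (x * (1 - t)) t) * (1 - t) := by
      rw [show (∫ x in (0:ℝ)..1, FF q x t)
          = ∫ x in (0:ℝ)..1, QQ q (x * (1 - t)) t * (1 - t) from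
          intervalIntegral.integral_congr (fun x _ => rfl)]
      rw [← intervalIntegral.integral_mul_const]
    have e3 := intervalIntegral.integral_comp_mul_right (a := (0:ℝ)) (b := 1)
      (f := fun u => QQ q u t) (c := 1 - t) h1t
    rw [e2, e3]
    rw [smul_eq_mul, zero_mul, one_mul]
    rw [intervalIntegral.integral_of_le (by linarith : (0:ℝ) ≤ 1 - t)]
    field_simp

lemma hIndInt : Integrable (Set.indicator refTriangle (fun z : ℝ × ℝ => QQ q z.1 z.2))
    (volume.prod volume) := by
  rw [integrable_indicator_iff refTriangle_meas, ← Measure.volume_eq_prod]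
  exact (contQQ q).continuousOn.integrableOn_compact refTriangle_compact

lemma claimD :
    (∫ t, (∫ u in Set.Ioc (0:ℝ) (1 - t), QQ q u t) ∂Smu)
      = ∫ z in refTriangle, QQ q z.1 z.2 := by
  have hR : (∫ z in refTriangle, QQ q z.1 z.2)
      = ∫ z : ℝ × ℝ, Set.indicator refTriangle (fun z : ℝ × ℝ => QQ q z.1 z.2) z := by
    rw [integral_indicator refTriangle_meas]
  rw [hR]
  rw [show (volume : Measure (ℝ × ℝ)) = (volume.prod volume) from Measure.volume_eq_prod ℝ ℝ]
  rw [MeasureTheory.integral_prod_symm _ (hIndInt q)]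
  -- inner integral computation
  have inner_eq : ∀ y : ℝ,
      (∫ x, Set.indicator refTriangle (fun z : ℝ × ℝ => QQ q z.1 z.2) (x, y))
        = Set.indicator (Set.Icc (0:ℝ) 1)
            (fun y => ∫ u in Set.Ioc (0:ℝ) (1 - y), QQ q u y) y := by
    intro y
    classical
    by_cases hy : y ∈ Set.Icc (0:ℝ) 1
    · have hset : (fun x : ℝ => Set.indicator refTriangle
          (fun z : ℝ × ℝ => QQ q z.1 z.2) (x, y))
          = Set.indicator (Set.Icc (0:ℝ) (1 - y)) (fun x => QQ q x y) := by
        funext x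
        rw [Set.indicator_apply, Set.indicator_apply]
        have : ((x, y) ∈ refTriangle) ↔ (x ∈ Set.Icc (0:ℝ) (1 - y)) := by
          simp only [refTriangle, Set.mem_setOf_eq, Set.mem_Icc]
          constructor
          · rintro ⟨a, b, c⟩; exact ⟨a, by linarith⟩
          · rintro ⟨a, b⟩; exact ⟨a, hy.1, by linarith⟩
        simp [this]
      rw [hset, MeasureTheory.integral_indicator measurableSet_Icc]
      rw [Set.indicator_of_mem hy]
      rw [integral_Icc_eq_integral_Ioc]
    · have hset : (fun x : ℝ => Set.indicator refTriangle
          (fun z : ℝ × ℝ => QQ q z.1 z.2) (x, y)) = fun _ => 0 := by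
        funext x
        rw [Set.indicator_apply]
        have : ((x, y) ∉ refTriangle) := by
          intro hmem
          rcases hmem with ⟨a, b, c⟩
          apply hy
          simp only [Set.mem_Icc]
          dsimp at * ; constructor <;> linarith
        simp [this]
      rw [hset, Set.indicator_of_notMem hy]
      simp
  rw [show (fun y : ℝ => ∫ x, Set.indicator refTriangle
        (fun z : ℝ × ℝ => QQ q z.1 z.2) (x, y))
      = Set.indicator (Set.Icc (0:ℝ) 1)
          (fun y => ∫ u in Set.Ioc (0:ℝ) (1 - y), QQ q u y) from funext (inner_eq)]
  rw [MeasureTheory.integral_indicator measurableSet_Icc]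
  rw [integral_Icc_eq_integral_Ioc]
  rfl

end Assembly

/-- $hp$-explicit L² trace inverse estimate on the reference
triangle (inequality (3.3) of Proposition 3.2 of the paper, squared form). -/
theorem trace_inverse_estimate_triangle :
    ∃ c : ℝ, 0 < c ∧
      ∀ p : ℕ, 1 ≤ p → ∀ q : MvPolynomial (Fin 2) ℝ, q.totalDegree ≤ p →
        ∫ x in Set.Icc (0 : ℝ) 1, (MvPolynomial.eval ![x, 0] q) ^ 2 ≤
          c * (p : ℝ) ^ 2 *
            ∫ z in refTriangle, (MvPolynomial.eval ![z.1, z.2] q) ^ 2 := by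
  refine ⟨16, by norm_num, ?_⟩
  intro p hp q hdeg
  have e1 : (∫ x in Set.Icc (0 : ℝ) 1, (MvPolynomial.eval ![x, 0] q) ^ 2)
      = ∫ x, QQ q x 0 ∂Smu := by
    rw [integral_Icc_eq_integral_Ioc]; rfl
  have hR : Integrable (fun x => 16 * (p:ℝ)^2 * ∫ t, FF q x t ∂Smu) Smu :=
    ((hFFint q).integral_prod_left).const_mul _
  have hpt : (fun x => QQ q x 0) ≤ fun x => 16 * (p:ℝ)^2 * ∫ t, FF q x t ∂Smu := by
    intro x
    have h := pointwise_bound q p hp hdeg x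
    have e : (∫ t in (0:ℝ)..1, FF q x t) = ∫ t, FF q x t ∂Smu := by
      rw [intervalIntegral.integral_of_le zero_le_one]; rfl
    rw [e] at h
    exact h
  have step2 : (∫ x, QQ q x 0 ∂Smu)
      ≤ ∫ x, (16 * (p:ℝ)^2 * ∫ t, FF q x t ∂Smu) ∂Smu :=
    integral_mono (hQ0int q) hR hpt
  have step3 : (∫ x, (16 * (p:ℝ)^2 * ∫ t, FF q x t ∂Smu) ∂Smu)
      = 16 * (p:ℝ)^2 * ∫ x, (∫ t, FF q x t ∂Smu) ∂Smu :=
    integral_const_mul _ _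
  have step4 : (∫ x, (∫ t, FF q x t ∂Smu) ∂Smu)
      = ∫ t, (∫ x, FF q x t ∂Smu) ∂Smu :=
    integral_integral_swap (hFFint q)
  have step5 : (∫ t, (∫ x, FF q x t ∂Smu) ∂Smu)
      = ∫ t, (∫ u in Set.Ioc (0:ℝ) (1 - t), QQ q u t) ∂Smu := by
    apply setIntegral_congr_fun measurableSet_Ioc
    intro t ht
    exact claimC q t ht
  have step6 := claimD q
  have efinal : (∫ z in refTriangle, QQ q z.1 z.2)
      = ∫ z in refTriangle, (MvPolynomial.eval ![z.1, z.2] q) ^ 2 := rfl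
  rw [e1]
  calc (∫ x, QQ q x 0 ∂Smu)
      ≤ ∫ x, (16 * (p:ℝ)^2 * ∫ t, FF q x t ∂Smu) ∂Smu := step2
    _ = 16 * (p:ℝ)^2 * ∫ x, (∫ t, FF q x t ∂Smu) ∂Smu := step3
    _ = 16 * (p:ℝ)^2 * ∫ z in refTriangle, (MvPolynomial.eval ![z.1, z.2] q) ^ 2 := by
        rw [step4, step5, step6, efinal]
end

section
/- There exists a constant c > 0 such that for every integer p ≥ 1 and every real polynomial q in two variables of degree at most p in each variable, ∫_0^1 q(x,0)² dx ≤ c · p² · ∫_S q(x,y)² dx dy, where S = [0,1]². -/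
set_option maxHeartbeats 1000000

open MeasureTheory Polynomial Finset

noncomputable def legP (n : ℕ) : Polynomial ℝ := derivative^[n] ((X ^ 2 - X) ^ n)

lemma polyII (f : Polynomial ℝ) (a b : ℝ) :
    IntervalIntegrable (fun x => f.eval x) volume a b :=
  (f.continuous_aeval).intervalIntegrable a b

lemma ibp_poly (f g : Polynomial ℝ) :
    ∫ x in (0:ℝ)..1, (derivative f).eval x * g.eval x
      = f.eval 1 * g.eval 1 - f.eval 0 * g.eval 0
        - ∫ x in (0:ℝ)..1, f.eval x * (derivative g).eval x := by
  have key := intervalIntegral.integral_mul_deriv_eq_deriv_mul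
    (u := fun x => g.eval x) (v := fun x => f.eval x)
    (u' := fun x => (derivative g).eval x) (v' := fun x => (derivative f).eval x)
    (fun x _ => g.hasDerivAt x) (fun x _ => f.hasDerivAt x)
    (polyII _ 0 1) (polyII _ 0 1)
  have h2 : (∫ x in (0:ℝ)..1, (derivative f).eval x * g.eval x)
      = ∫ x in (0:ℝ)..1, g.eval x * (derivative f).eval x :=
    intervalIntegral.integral_congr (fun x _ => mul_comm _ _)
  have h3 : (∫ x in (0:ℝ)..1, (derivative g).eval x * f.eval x)
      = ∫ x in (0:ℝ)..1, f.eval x * (derivative g).eval x :=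
    intervalIntegral.integral_congr (fun x _ => mul_comm _ _)
  rw [h2, key]; rw [h3]; ring

lemma dvd_iterate_deriv (a : ℝ) (m k : ℕ) (f : Polynomial ℝ) (h : (X - C a) ^ m ∣ f)
    (hk : k ≤ m) : (X - C a) ^ (m - k) ∣ derivative^[k] f := by
  induction k with
  | zero => simpa using h
  | succ k ih =>
    have hk' : k ≤ m := Nat.le_of_succ_le hk
    obtain ⟨g, hg⟩ := ih hk'
    rw [Function.iterate_succ_apply', hg, derivative_mul]
    refine dvd_add ?_ ?_
    · rw [derivative_pow, show m - k - 1 = m - (k+1) from by omega]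
      exact ⟨C ((m - k : ℕ) : ℝ) * derivative (X - C a) * g, by ring⟩
    · exact ⟨(X - C a) * derivative g, by rw [show m - k = m - (k+1) + 1 from by omega]; ring⟩

lemma eval_iter_F_zero {n k : ℕ} (hk : k < n) (x : ℝ) (hx : x = 0 ∨ x = 1) :
    (derivative^[k] ((X ^ 2 - X : Polynomial ℝ) ^ n)).eval x = 0 := by
  have hfac : ∀ a : ℝ, (x = a) → (X - C a : Polynomial ℝ) ^ n ∣ (X ^ 2 - X) ^ n → 
      (derivative^[k] ((X ^ 2 - X : Polynomial ℝ) ^ n)).eval x = 0 := by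
    intro a hxa hdvd
    obtain ⟨g, hg⟩ := dvd_iterate_deriv a n k _ hdvd hk.le
    rw [hg, eval_mul, eval_pow, eval_sub, eval_X, eval_C, hxa, sub_self,
      zero_pow (by omega), zero_mul]
  have hsplit : ((X : Polynomial ℝ) ^ 2 - X) = X * (X - C 1) := by rw [C_1]; ring
  rcases hx with h0 | h1
  · refine hfac 0 h0 ?_
    rw [hsplit, mul_pow]
    exact ⟨(X - C 1) ^ n, by rw [C_0, sub_zero]⟩
  · exact hfac 1 h1 ⟨X ^ n, by rw [hsplit, mul_pow]; ring⟩

lemma key_shift (n k : ℕ) (hk : k ≤ n) (g : Polynomial ℝ) :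
    ∫ x in (0:ℝ)..1, (legP n).eval x * g.eval x
      = (-1 : ℝ) ^ k * ∫ x in (0:ℝ)..1,
          (derivative^[n - k] ((X ^ 2 - X) ^ n)).eval x * (derivative^[k] g).eval x := by
  induction k with
  | zero => simp [legP]
  | succ k ih =>
    have hk' : k ≤ n := Nat.le_of_succ_le hk
    rw [ih hk']
    have hnk : n - k = (n - (k + 1)) + 1 := by omega
    have hD : derivative^[n - k] ((X ^ 2 - X : Polynomial ℝ) ^ n)
        = derivative (derivative^[n - (k + 1)] ((X ^ 2 - X) ^ n)) := by
      rw [hnk, Function.iterate_succ_apply']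
    rw [hD, ibp_poly,
      eval_iter_F_zero (by omega) 1 (Or.inr rfl),
      eval_iter_F_zero (by omega) 0 (Or.inl rfl),
      ← Function.iterate_succ_apply' derivative k g]
    ring

lemma orth_s7 (n : ℕ) (g : Polynomial ℝ) (hg : g.natDegree < n) :
    ∫ x in (0:ℝ)..1, (legP n).eval x * g.eval x = 0 := by
  rw [key_shift n n le_rfl g, Polynomial.iterate_derivative_eq_zero hg]
  simp

lemma J_val (a b : ℕ) :
    ∫ x in (0:ℝ)..1, x ^ a * (1 - x) ^ b
      = (a.factorial : ℝ) * b.factorial / (a + b + 1).factorial := by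
  induction b generalizing a with
  | zero =>
    simp only [pow_zero, mul_one, integral_pow, one_pow, Nat.factorial_zero]
    rw [Nat.add_zero, Nat.factorial_succ]
    push_cast
    rw [zero_pow (by omega)]
    field_simp
    all_goals ring
  | succ b ih =>
    have key := intervalIntegral.integral_mul_deriv_eq_deriv_mul
      (u := fun x : ℝ => (1 - x) ^ (b + 1)) (v := fun x : ℝ => x ^ (a + 1) / ((a : ℝ) + 1))
      (u' := fun x : ℝ => -((b : ℝ) + 1) * (1 - x) ^ b) (v' := fun x : ℝ => x ^ a)
      (a := 0) (b := 1) ?_ ?_ ?_ ?_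
    · have h1 : (∫ x in (0:ℝ)..1, x ^ a * (1 - x) ^ (b + 1))
          = ∫ x in (0:ℝ)..1, (1 - x) ^ (b + 1) * x ^ a :=
        intervalIntegral.integral_congr (fun x _ => mul_comm _ _)
      rw [h1, key]
      have h2 : (∫ x in (0:ℝ)..1, -((b : ℝ) + 1) * (1 - x) ^ b * (x ^ (a + 1) / ((a : ℝ) + 1)))
          = (-((b : ℝ) + 1) / ((a : ℝ) + 1)) * ∫ x in (0:ℝ)..1, x ^ (a + 1) * (1 - x) ^ b := by
        rw [← intervalIntegral.integral_const_mul]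
        exact intervalIntegral.integral_congr (fun x _ => by ring)
      rw [h2, ih (a + 1)]
      have hfa : ((a + 1 + b + 1).factorial : ℝ) = ((a + 1 + b + 1) : ℕ) * (a + b + 1).factorial := by
        rw [show a + 1 + b + 1 = (a + b + 1) + 1 from by ring, Nat.factorial_succ]
        push_cast; ring
      rw [show a + (b + 1) + 1 = a + 1 + b + 1 from by ring, hfa,
        Nat.factorial_succ a, Nat.factorial_succ b]
      have h3 : ((a : ℝ) + 1) ≠ 0 := by positivity
      have h4 : ((a + b + 1).factorial : ℝ) ≠ 0 := by positivity
      have h5 : ((a + 1 + b + 1 : ℕ) : ℝ) ≠ 0 := by positivity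
      field_simp
      push_cast
      try ring
    · intro x _
      have h := ((hasDerivAt_id x).const_sub 1).pow (b + 1)
      refine h.congr_deriv ?_
      push_cast
      simp
      ring
    · intro x _
      exact (hasDerivAt_pow (a + 1) x).div_const _ |>.congr_deriv (by
        field_simp
        all_goals (rw [show a + 1 - 1 = a from by omega]; push_cast; ring))
    · exact (Continuous.intervalIntegrable (by continuity) 0 1)
    · exact (Continuous.intervalIntegrable (by continuity) 0 1)

lemma monic_F (n : ℕ) : ((X ^ 2 - X : Polynomial ℝ) ^ n).Monic := by
  have hsplit : ((X : Polynomial ℝ) ^ 2 - X) = X * (X - C 1) := by rw [C_1]; ring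
  rw [hsplit]
  exact (monic_X.mul (monic_X_sub_C 1)).pow n

lemma natDegree_F (n : ℕ) : ((X ^ 2 - X : Polynomial ℝ) ^ n).natDegree = 2 * n := by
  have hsplit : ((X : Polynomial ℝ) ^ 2 - X) = X * (X - C 1) := by rw [C_1]; ring
  rw [hsplit, Polynomial.Monic.natDegree_pow (monic_X.mul (monic_X_sub_C 1))]
  have : ((X : Polynomial ℝ) * (X - C 1)).natDegree = 2 := by
    rw [natDegree_mul (X_ne_zero) (X_sub_C_ne_zero 1), natDegree_X, natDegree_X_sub_C]
  rw [this]
  omega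

lemma legP_norm (n : ℕ) :
    ∫ x in (0:ℝ)..1, (legP n).eval x * (legP n).eval x
      = (n.factorial : ℝ) ^ 2 / (2 * n + 1) := by
  rw [key_shift n n le_rfl (legP n), Nat.sub_self, Function.iterate_zero_apply]
  have hDD : derivative^[n] (legP n) = derivative^[2 * n] ((X ^ 2 - X : Polynomial ℝ) ^ n) := by
    rw [legP, ← Function.iterate_add_apply, show n + n = 2 * n from by ring]
  have hd : (derivative^[2 * n] ((X ^ 2 - X : Polynomial ℝ) ^ n)).natDegree ≤ 0 := by
    have := Polynomial.natDegree_iterate_derivative ((X ^ 2 - X : Polynomial ℝ) ^ n) (2 * n)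
    rw [natDegree_F] at this; omega
  have hconst : derivative^[2 * n] ((X ^ 2 - X : Polynomial ℝ) ^ n)
      = C (((2 * n).factorial : ℝ)) := by
    rw [eq_C_of_natDegree_le_zero hd, Polynomial.coeff_iterate_derivative]
    congr 1
    rw [Nat.zero_add, show (2 * n) = ((X ^ 2 - X : Polynomial ℝ) ^ n).natDegree
      from (natDegree_F n).symm, (monic_F n).coeff_natDegree, natDegree_F]
    simp [Nat.descFactorial_self]
  rw [hDD, hconst]
  have hint : (∫ x in (0:ℝ)..1,
        ((X ^ 2 - X : Polynomial ℝ) ^ n).eval x * (C (((2 * n).factorial : ℝ))).eval x)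
      = (-1 : ℝ) ^ n * (((2 * n).factorial : ℝ) * ∫ x in (0:ℝ)..1, x ^ n * (1 - x) ^ n) := by
    rw [← intervalIntegral.integral_const_mul, ← intervalIntegral.integral_const_mul]
    refine intervalIntegral.integral_congr fun x _ => ?_
    simp only [eval_pow, eval_sub, eval_X, eval_C]
    rw [show (x ^ 2 - x) = -(x * (1 - x)) from by ring, neg_pow, mul_pow]
    ring
  rw [hint, J_val n n]
  have h1 : ((n + n + 1).factorial : ℝ) = ((2 * n + 1 : ℕ) : ℝ) * ((2 * n).factorial : ℝ) := by
    rw [show n + n + 1 = (2 * n) + 1 from by ring, Nat.factorial_succ]; push_cast; ring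
  have h2 : (-1 : ℝ) ^ n * (-1 : ℝ) ^ n = 1 := by
    rw [← pow_add, ← two_mul, pow_mul]; norm_num
  rw [h1, ← mul_assoc, h2, one_mul]
  have h3 : ((2 * n).factorial : ℝ) ≠ 0 := by positivity
  have h4 : ((2 * n + 1 : ℕ) : ℝ) ≠ 0 := by positivity
  have h5 : ((2 : ℝ) * n + 1) ≠ 0 := by positivity
  field_simp
  push_cast
  ring

lemma legP_coeff_ne (n : ℕ) : (legP n).coeff n ≠ 0 := by
  rw [legP, Polynomial.coeff_iterate_derivative]
  have h1 : ((X ^ 2 - X : Polynomial ℝ) ^ n).coeff (n + n) = 1 := by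
    rw [show n + n = 2 * n from by ring, ← natDegree_F n]
    exact (monic_F n).coeff_natDegree
  rw [h1]
  simp only [nsmul_eq_mul, mul_one]
  have : 0 < (n + n).descFactorial n := by
    rcases Nat.eq_zero_or_pos ((n + n).descFactorial n) with h | h
    · rw [Nat.descFactorial_eq_zero_iff_lt] at h; omega
    · exact h
  positivity

lemma legP_natDegree_le (n : ℕ) : (legP n).natDegree ≤ n := by
  have := Polynomial.natDegree_iterate_derivative ((X ^ 2 - X : Polynomial ℝ) ^ n) n
  rw [natDegree_F n] at this
  exact this.trans (by omega)

lemma legP_eval_zero (n : ℕ) : (legP n).eval 0 = (-1 : ℝ) ^ n * n.factorial := by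
  rw [← coeff_zero_eq_eval_zero, legP, Polynomial.coeff_iterate_derivative]
  have hsplit : ((X : Polynomial ℝ) ^ 2 - X) ^ n = X ^ n * (X - C 1) ^ n := by
    rw [show ((X : Polynomial ℝ) ^ 2 - X) = X * (X - C 1) from by rw [C_1]; ring, mul_pow]
  have h1 : ((X ^ 2 - X : Polynomial ℝ) ^ n).coeff (0 + n) = (-1 : ℝ) ^ n := by
    rw [hsplit, Polynomial.coeff_X_pow_mul, coeff_zero_eq_eval_zero]
    simp
  rw [h1, Nat.zero_add, Nat.descFactorial_self]
  simp [nsmul_eq_mul]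
  ring

lemma decomp (p : ℕ) (r : Polynomial ℝ) (hr : r.natDegree ≤ p) :
    ∃ a : ℕ → ℝ, r = ∑ n ∈ Finset.range (p + 1), C (a n) * legP n := by
  induction p generalizing r with
  | zero =>
    refine ⟨fun _ => r.coeff 0, ?_⟩
    have h0 : legP 0 = 1 := by simp [legP]
    rw [eq_C_of_natDegree_le_zero hr]
    simp [h0]
  | succ p ih =>
    set c : ℝ := r.coeff (p + 1) / (legP (p + 1)).coeff (p + 1) with hc_def
    set r' : Polynomial ℝ := r - C c * legP (p + 1) with hr'_def
    have hcoeff : r'.coeff (p + 1) = 0 := by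
      rw [hr'_def, coeff_sub, coeff_C_mul, hc_def,
        div_mul_cancel₀ _ (legP_coeff_ne (p + 1)), sub_self]
    have hd : r'.natDegree ≤ p := by
      rw [Polynomial.natDegree_le_iff_coeff_eq_zero]
      intro m hm
      rcases eq_or_lt_of_le (Nat.succ_le_of_lt hm) with h | h
      · rw [← h]; exact hcoeff
      · rw [hr'_def, coeff_sub, coeff_C_mul,
          coeff_eq_zero_of_natDegree_lt (lt_of_le_of_lt hr h),
          coeff_eq_zero_of_natDegree_lt (lt_of_le_of_lt (legP_natDegree_le (p + 1)) h)]
        ring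
    obtain ⟨a, ha⟩ := ih r' hd
    refine ⟨Function.update a (p + 1) c, ?_⟩
    rw [Finset.sum_range_succ]
    have hsum : (∑ n ∈ Finset.range (p + 1), C (Function.update a (p + 1) c n) * legP n)
        = ∑ n ∈ Finset.range (p + 1), C (a n) * legP n := by
      refine Finset.sum_congr rfl fun n hn => ?_
      rw [Function.update_of_ne (by simp at hn; omega)]
    rw [hsum, ← ha, Function.update_self, hr'_def]
    ring

theorem oneD (p : ℕ) (r : Polynomial ℝ) (hr : r.natDegree ≤ p) :
    (r.eval 0) ^ 2 ≤ ((p : ℝ) + 1) ^ 2 * ∫ x in (0:ℝ)..1, (r.eval x) ^ 2 := by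
  obtain ⟨a, ha⟩ := decomp p r hr
  set s : Finset ℕ := Finset.range (p + 1) with hs
  have hm1 : ∀ k : ℕ, ((-1 : ℝ) ^ k) ^ 2 = 1 := fun k => by
    rw [← pow_mul, mul_comm, pow_mul]; norm_num
  have he : r.eval 0 = ∑ n ∈ s, a n * ((-1 : ℝ) ^ n * n.factorial) := by
    rw [ha, eval_finset_sum]
    exact Finset.sum_congr rfl fun n _ => by rw [eval_mul, eval_C, legP_eval_zero]
  have hi : (∫ x in (0:ℝ)..1, (r.eval x) ^ 2)
      = ∑ n ∈ s, (a n) ^ 2 * ((n.factorial : ℝ) ^ 2 / (2 * n + 1)) := by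
    rw [ha]
    have hx : ∀ x : ℝ, ((∑ n ∈ s, C (a n) * legP n).eval x) ^ 2
        = ∑ n ∈ s, ∑ m ∈ s, (a n * a m) * ((legP n).eval x * (legP m).eval x) := by
      intro x
      rw [eval_finset_sum, sq, Finset.sum_mul_sum]
      exact Finset.sum_congr rfl fun n _ => Finset.sum_congr rfl fun m _ => by
        simp only [eval_mul, eval_C]; ring
    have hcont : ∀ n m : ℕ, Continuous
        (fun x : ℝ => (a n * a m) * ((legP n).eval x * (legP m).eval x)) := fun n m =>
      continuous_const.mul (((legP n).continuous).mul ((legP m).continuous))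
    rw [intervalIntegral.integral_congr (fun x _ => hx x)]
    rw [intervalIntegral.integral_finset_sum
      (f := fun n (x : ℝ) => ∑ m ∈ s, a n * a m * ((legP n).eval x * (legP m).eval x))
      (fun n _ => ((continuous_finset_sum s (fun m _ => hcont n m)).intervalIntegrable 0 1))]
    refine Finset.sum_congr rfl fun n hn => ?_
    rw [intervalIntegral.integral_finset_sum
      (f := fun m (x : ℝ) => a n * a m * ((legP n).eval x * (legP m).eval x))
      (fun m _ => ((hcont n m).intervalIntegrable 0 1))]
    rw [Finset.sum_eq_single n]
    · rw [intervalIntegral.integral_const_mul, legP_norm, sq]; ring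
    · intro m hms hmn
      rw [intervalIntegral.integral_const_mul]
      rcases Nat.lt_or_ge m n with h | h
      · rw [orth_s7 n (legP m) (lt_of_le_of_lt (legP_natDegree_le m) h), mul_zero]
      · have hnm : n < m := by omega
        rw [intervalIntegral.integral_congr
            (fun x _ => mul_comm ((legP n).eval x) ((legP m).eval x)),
          orth_s7 m (legP n) (lt_of_le_of_lt (legP_natDegree_le n) hnm), mul_zero]
    · intro hns
      exact absurd hn hns
  have hsq : ∀ n : ℕ, (0 : ℝ) < 2 * n + 1 := fun n => by positivity
  have hcs := Finset.sum_mul_sq_le_sq_mul_sq s (fun n => Real.sqrt (2 * n + 1))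
    (fun n => a n * ((-1 : ℝ) ^ n * n.factorial) / Real.sqrt (2 * n + 1))
  have hfg : ∀ n : ℕ, Real.sqrt (2 * n + 1) *
      (a n * ((-1 : ℝ) ^ n * n.factorial) / Real.sqrt (2 * n + 1))
      = a n * ((-1 : ℝ) ^ n * n.factorial) := fun n => by
    rw [mul_div_cancel₀]
    exact Real.sqrt_ne_zero'.mpr (hsq n)
  have hf2 : ∀ n : ℕ, (Real.sqrt (2 * n + 1)) ^ 2 = 2 * (n : ℝ) + 1 := fun n =>
    Real.sq_sqrt (hsq n).le
  have hg2 : ∀ n : ℕ, (a n * ((-1 : ℝ) ^ n * n.factorial) / Real.sqrt (2 * n + 1)) ^ 2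
      = (a n) ^ 2 * ((n.factorial : ℝ) ^ 2 / (2 * n + 1)) := fun n => by
    rw [div_pow, hf2 n, mul_pow, mul_pow, hm1 n, one_mul]
    ring
  simp only [hfg, hf2, hg2] at hcs
  have hsumsq : (∑ n ∈ s, (2 * (n : ℝ) + 1)) = ((p : ℝ) + 1) ^ 2 := by
    have : ∀ k : ℕ, (∑ n ∈ Finset.range k, (2 * (n : ℝ) + 1)) = (k : ℝ) ^ 2 := by
      intro k
      induction k with
      | zero => simp
      | succ k ihk => rw [Finset.sum_range_succ, ihk]; push_cast; ring
    rw [hs, this (p + 1)]; push_cast; ring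
  rw [he, hi]
  calc (∑ n ∈ s, a n * ((-1 : ℝ) ^ n * n.factorial)) ^ 2
      ≤ (∑ n ∈ s, (2 * (n : ℝ) + 1)) * ∑ n ∈ s, (a n) ^ 2 * ((n.factorial : ℝ) ^ 2 / (2 * n + 1)) := hcs
    _ = ((p : ℝ) + 1) ^ 2 * ∑ n ∈ s, (a n) ^ 2 * ((n.factorial : ℝ) ^ 2 / (2 * n + 1)) := by
        rw [hsumsq]

open MvPolynomial in
lemma eval_aeval2 (q : MvPolynomial (Fin 2) ℝ) (f : Fin 2 → Polynomial ℝ) (y : ℝ) :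
    (MvPolynomial.aeval f q).eval y = MvPolynomial.eval (fun i => (f i).eval y) q := by
  induction q using MvPolynomial.induction_on with
  | C a => simp
  | add p q' hp hq => simp [hp, hq]
  | mul_X p i hp => simp [hp]

lemma eval_restrict (q : MvPolynomial (Fin 2) ℝ) (x y : ℝ) :
    (MvPolynomial.aeval ![Polynomial.C x, Polynomial.X] q : Polynomial ℝ).eval y
      = MvPolynomial.eval ![x, y] q := by
  rw [eval_aeval2]
  have : (fun i => Polynomial.eval y ((![Polynomial.C x, Polynomial.X] :
      Fin 2 → Polynomial ℝ) i)) = ![x, y] := by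
    funext i
    fin_cases i <;> simp
  rw [this]

lemma natDeg_restrict (q : MvPolynomial (Fin 2) ℝ) (x : ℝ) :
    (MvPolynomial.aeval ![Polynomial.C x, Polynomial.X] q : Polynomial ℝ).natDegree
      ≤ q.degreeOf 1 := by
  conv_lhs => rw [q.as_sum]
  rw [map_sum]
  refine Polynomial.natDegree_sum_le_of_forall_le _ _ fun m hm => ?_
  rw [MvPolynomial.aeval_monomial]
  refine (Polynomial.natDegree_mul_le).trans ?_
  have halg : ((algebraMap ℝ (Polynomial ℝ)) (MvPolynomial.coeff m q)).natDegree = 0 := by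
    simp [Polynomial.natDegree_C]
  rw [halg, zero_add]
  have hprod : (m.prod fun i k =>
      (![Polynomial.C x, Polynomial.X] : Fin 2 → Polynomial ℝ) i ^ k).natDegree ≤ m 1 := by
    rw [Finsupp.prod]
    refine (Polynomial.natDegree_prod_le _ _).trans ?_
    have hb : ∀ i ∈ m.support,
        ((![Polynomial.C x, Polynomial.X] : Fin 2 → Polynomial ℝ) i ^ m i).natDegree
          ≤ (if i = 1 then m 1 else 0) := by
      intro i _
      fin_cases i
      · simpa using (Polynomial.natDegree_pow_le
          (p := (Polynomial.C x : Polynomial ℝ)) (n := m 0)).trans (by simp)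
      · simp
    refine (Finset.sum_le_sum hb).trans ?_
    refine (Finset.sum_le_sum_of_subset_of_nonneg (Finset.subset_univ _)
      (fun _ _ _ => by positivity)).trans ?_
    rw [Fin.sum_univ_two]
    simp
  exact hprod.trans (MvPolynomial.monomial_le_degreeOf 1 hm)

/-- The unit square `S = [0,1]²`. -/
def unitSquare : Set (ℝ × ℝ) := Set.Icc (0 : ℝ) 1 ×ˢ Set.Icc (0 : ℝ) 1

/-- $hp$-explicit L² trace inverse estimate on the unit square
(inequality (3.3) of Proposition 3.2 of the paper, squared form). -/
theorem trace_inverse_estimate_square :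
    ∃ c : ℝ, 0 < c ∧
      ∀ p : ℕ, 1 ≤ p → ∀ q : MvPolynomial (Fin 2) ℝ,
        (∀ i : Fin 2, q.degreeOf i ≤ p) →
        ∫ x in Set.Icc (0 : ℝ) 1, (MvPolynomial.eval ![x, 0] q) ^ 2 ≤
          c * (p : ℝ) ^ 2 *
            ∫ z in unitSquare, (MvPolynomial.eval ![z.1, z.2] q) ^ 2 := by
  refine ⟨4, by norm_num, ?_⟩
  intro p hp q hdeg
  have hcontv : Continuous fun z : ℝ × ℝ => (![z.1, z.2] : Fin 2 → ℝ) := by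
    refine continuous_pi fun i => ?_
    fin_cases i
    · exact continuous_fst
    · exact continuous_snd
  have hcont2 : Continuous fun z : ℝ × ℝ => (MvPolynomial.eval ![z.1, z.2] q) ^ 2 :=
    ((MvPolynomial.continuous_eval (p := q)).comp hcontv).pow 2
  have hcontv1 : Continuous fun x : ℝ => (![x, 0] : Fin 2 → ℝ) := by
    refine continuous_pi fun i => ?_
    fin_cases i
    · exact continuous_id
    · exact continuous_const
  have hcont1 : Continuous fun x : ℝ => (MvPolynomial.eval ![x, 0] q) ^ 2 :=
    ((MvPolynomial.continuous_eval (p := q)).comp hcontv1).pow 2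
  have hFint : IntegrableOn (fun z : ℝ × ℝ => (MvPolynomial.eval ![z.1, z.2] q) ^ 2)
      (Set.Icc 0 1 ×ˢ Set.Icc 0 1) volume :=
    hcont2.continuousOn.integrableOn_compact (isCompact_Icc.prod isCompact_Icc)
  have hFint' : Integrable (fun z : ℝ × ℝ => (MvPolynomial.eval ![z.1, z.2] q) ^ 2)
      ((volume.restrict (Set.Icc (0:ℝ) 1)).prod (volume.restrict (Set.Icc (0:ℝ) 1))) := by
    rw [Measure.prod_restrict]
    exact hFint
  have hFub : (∫ z in unitSquare, (MvPolynomial.eval ![z.1, z.2] q) ^ 2)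
      = ∫ x in Set.Icc (0:ℝ) 1, ∫ y in Set.Icc (0:ℝ) 1, (MvPolynomial.eval ![x, y] q) ^ 2 := by
    rw [unitSquare, MeasureTheory.Measure.volume_eq_prod,
      MeasureTheory.setIntegral_prod _ (by rw [← MeasureTheory.Measure.volume_eq_prod]; exact hFint)]
  have hpt : ∀ x : ℝ, (MvPolynomial.eval ![x, 0] q) ^ 2
      ≤ 4 * (p : ℝ) ^ 2 * ∫ y in Set.Icc (0:ℝ) 1, (MvPolynomial.eval ![x, y] q) ^ 2 := by
    intro x
    set r : Polynomial ℝ := MvPolynomial.aeval ![Polynomial.C x, Polynomial.X] q with hr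
    have hdr : r.natDegree ≤ p := (natDeg_restrict q x).trans (hdeg 1)
    have h1 := oneD p r hdr
    have hIcc : (∫ y in Set.Icc (0:ℝ) 1, (MvPolynomial.eval ![x, y] q) ^ 2)
        = ∫ y in (0:ℝ)..1, (r.eval y) ^ 2 := by
      rw [MeasureTheory.integral_Icc_eq_integral_Ioc,
        intervalIntegral.integral_of_le (by norm_num)]
      refine setIntegral_congr_fun measurableSet_Ioc fun y _ => ?_
      rw [hr, eval_restrict]
    rw [hIcc]
    have hnonneg : 0 ≤ ∫ y in (0:ℝ)..1, (r.eval y) ^ 2 :=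
      intervalIntegral.integral_nonneg (by norm_num) (fun y _ => sq_nonneg _)
    have hfac : ((p : ℝ) + 1) ^ 2 ≤ 4 * (p : ℝ) ^ 2 := by
      have h1p : (1 : ℝ) ≤ p := by exact_mod_cast hp
      nlinarith
    have heq : MvPolynomial.eval ![x, 0] q = r.eval 0 := by rw [hr, eval_restrict]
    rw [heq]
    calc (r.eval 0) ^ 2 ≤ ((p : ℝ) + 1) ^ 2 * ∫ y in (0:ℝ)..1, (r.eval y) ^ 2 := h1
      _ ≤ 4 * (p : ℝ) ^ 2 * ∫ y in (0:ℝ)..1, (r.eval y) ^ 2 :=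
          mul_le_mul_of_nonneg_right hfac hnonneg
  have hg : IntegrableOn
      (fun x : ℝ => ∫ y in Set.Icc (0:ℝ) 1, (MvPolynomial.eval ![x, y] q) ^ 2)
      (Set.Icc (0:ℝ) 1) volume := hFint'.integral_prod_left
  have hmono := MeasureTheory.setIntegral_mono_on
    (hcont1.integrableOn_Icc)
    (hg.const_mul (4 * (p : ℝ) ^ 2))
    measurableSet_Icc (fun x _ => hpt x)
  calc (∫ x in Set.Icc (0:ℝ) 1, (MvPolynomial.eval ![x, 0] q) ^ 2)
      ≤ ∫ x in Set.Icc (0:ℝ) 1,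
          4 * (p : ℝ) ^ 2 * ∫ y in Set.Icc (0:ℝ) 1, (MvPolynomial.eval ![x, y] q) ^ 2 := hmono
    _ = 4 * (p : ℝ) ^ 2 * ∫ x in Set.Icc (0:ℝ) 1,
          ∫ y in Set.Icc (0:ℝ) 1, (MvPolynomial.eval ![x, y] q) ^ 2 :=
        MeasureTheory.integral_const_mul _ _
    _ = 4 * (p : ℝ) ^ 2 * ∫ z in unitSquare, (MvPolynomial.eval ![z.1, z.2] q) ^ 2 := by
        rw [hFub]
end

section
/- Let T = {(x,y) ∈ ℝ² : x ≥ 0, y ≥ 0, x + y ≤ 1} and let b(x,y) = x·y·(1 − x − y) be its bubble function. There exists a constant c > 0 such that for every integer p ≥ 1 and every real polynomial q in two variables of total degree at most p, ∫_T ((∂_x(b·q))² + (∂_y(b·q))²) dx dy ≤ c · p² · ∫_T q² dx dy. -/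
open MeasureTheory

/-- The bubble function `b(x,y) = x·y·(1 - x - y)` of the reference triangle,
as a polynomial. -/
noncomputable def triangleBubble : MvPolynomial (Fin 2) ℝ :=
  MvPolynomial.X 0 * MvPolynomial.X 1 * (1 - MvPolynomial.X 0 - MvPolynomial.X 1)

open Polynomial intervalIntegral

lemma mem_refTriangle {z : ℝ × ℝ} :
    z ∈ refTriangle ↔ 0 ≤ z.1 ∧ 0 ≤ z.2 ∧ z.1 + z.2 ≤ 1 := Iff.rfl

namespace TriProof

noncomputable def rod (a : ℝ) (n : ℕ) : ℝ[X] := derivative^[n] ((X ^ 2 - C a * X) ^ n)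

lemma natDegree_vq (a : ℝ) : (X ^ 2 - C a * X : ℝ[X]).natDegree ≤ 2 := by
  refine (natDegree_sub_le _ _).trans (max_le (by simp) ?_)
  exact (natDegree_C_mul_le a X).trans (by simp)

lemma iterate_derivative_vq_eq_zero (a : ℝ) {k : ℕ} (hk : 3 ≤ k) :
    derivative^[k] (X ^ 2 - C a * X : ℝ[X]) = 0 :=
  iterate_derivative_eq_zero (lt_of_le_of_lt (natDegree_vq a) hk)

/-- Truncated Leibniz rule for a quadratic first factor. -/
lemma leib_quadratic (a : ℝ) (g : ℝ[X]) (m : ℕ) :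
    derivative^[m + 2] ((X ^ 2 - C a * X) * g) =
      (X ^ 2 - C a * X) * derivative^[m + 2] g
        + (m + 2) • (derivative (X ^ 2 - C a * X) * derivative^[m + 1] g)
        + ((m + 2).choose 2) • (derivative (derivative (X ^ 2 - C a * X)) * derivative^[m] g) := by
  rw [iterate_derivative_mul]
  rw [Finset.sum_range_succ, Finset.sum_range_succ, Finset.sum_range_succ]
  rw [Finset.sum_eq_zero]
  · simp only [zero_add, Nat.sub_self, Function.iterate_zero, id_eq, Nat.choose_self, one_smul,
      Nat.succ_sub_one]
    have h1 : m + 2 - m = 2 := by omega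
    have h2 : m + 2 - (m+1) = 1 := by omega
    have h3 : (m+2).choose (m+1) = m + 2 := Nat.choose_succ_self_right _
    have h4 : (m+2).choose m = (m+2).choose 2 := by
      rw [← Nat.choose_symm (by omega : 2 ≤ m + 2)]
      norm_num
    rw [h1, h2, h3, h4]
    simp only [nsmul_eq_mul, Function.iterate_one,
      show ∀ f : ℝ[X], derivative^[2] f = derivative (derivative f) from fun f => rfl]
    push_cast
    ring
  · intro k hk
    have : derivative^[m + 2 - k] (X ^ 2 - C a * X : ℝ[X]) = 0 :=
      iterate_derivative_vq_eq_zero a (by simp at hk; omega)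
    rw [this, zero_mul, smul_zero]

/-- Truncated Leibniz rule for a linear first factor. -/
lemma leib_linear (w : ℝ[X]) (hw : w.natDegree ≤ 1) (g : ℝ[X]) (m : ℕ) :
    derivative^[m + 1] (w * g) =
      w * derivative^[m + 1] g + (m + 1) • (derivative w * derivative^[m] g) := by
  rw [iterate_derivative_mul]
  rw [Finset.sum_range_succ, Finset.sum_range_succ]
  rw [Finset.sum_eq_zero]
  · simp only [zero_add, Nat.sub_self, Function.iterate_zero, id_eq, Nat.choose_self, one_smul,
      Nat.succ_sub_one, Nat.choose_succ_self_right]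
    rw [show m + 1 - m = 1 by omega]
    simp [add_comm]
  · intro k hk
    simp only [Finset.mem_range] at hk
    have : derivative^[m + 1 - k] w = 0 :=
      iterate_derivative_eq_zero (by omega : w.natDegree < m + 1 - k)
    rw [this, zero_mul, smul_zero]

lemma derivative_vq (a : ℝ) : derivative (X ^ 2 - C a * X : ℝ[X]) = C 2 * X - C a := by
  simp [derivative_X_pow]
  rw [one_add_one_eq_two]; exact (map_ofNat C 2).symm

lemma rod_eigen (a : ℝ) (n : ℕ) :
    derivative ((X ^ 2 - C a * X) * derivative (rod a n)) = (n * (n + 1)) • rod a n := by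
  cases n with
  | zero => simp [rod]
  | succ m =>
    have hdeg1 : (derivative (X ^ 2 - C a * X : ℝ[X])).natDegree ≤ 1 := by
      rw [derivative_vq]
      refine (natDegree_sub_le _ _).trans (max_le ?_ (by simp))
      exact (natDegree_C_mul_le 2 X).trans (by simp)
    have hD2 : derivative (derivative (X ^ 2 - C a * X : ℝ[X])) = C 2 := by
      rw [derivative_vq]; simp
    have hstep : (X ^ 2 - C a * X : ℝ[X]) * derivative ((X ^ 2 - C a * X) ^ (m+1))
        = C ((m+1 : ℕ) : ℝ) * (derivative (X ^ 2 - C a * X) * (X ^ 2 - C a * X) ^ (m+1)) := by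
      rw [derivative_pow]
      norm_num
      ring
    have key := congrArg (derivative^[m+2]) hstep
    rw [leib_quadratic a (derivative ((X ^ 2 - C a * X) ^ (m+1))) m,
        iterate_derivative_C_mul,
        leib_linear (derivative (X ^ 2 - C a * X)) hdeg1 ((X ^ 2 - C a * X) ^ (m+1)) (m+1)]
      at key
    rw [← Function.iterate_succ_apply derivative (m+2),
        ← Function.iterate_succ_apply derivative (m+1),
        ← Function.iterate_succ_apply derivative m] at key
    rw [hD2] at key
    -- normalize iterate indices
    simp only [show (m+2).succ = m+3 from rfl, show (m+1).succ = m+2 from rfl,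
      show m.succ = m+1 from rfl, show m+1+1 = m+2 from rfl] at key
    -- the goal
    have hrod : derivative (rod a (m+1)) = derivative^[m+2] ((X ^ 2 - C a * X) ^ (m+1)) := by
      rw [rod, ← Function.iterate_succ_apply' derivative (m+1)]
    rw [hrod, derivative_mul, rod,
        show derivative (derivative^[m+2] ((X ^ 2 - C a * X) ^ (m+1)))
            = derivative^[m+3] ((X ^ 2 - C a * X) ^ (m+1)) from
          (Function.iterate_succ_apply' derivative (m+2) _).symm]
    have hdvd : 2 ∣ (m+2) * (m+1) := by
      rw [Nat.mul_comm]; exact (Nat.even_mul_succ_self (m+1)).two_dvd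
    have h2 : 2 * ((m+2).choose 2) = (m+1) * (m+2) := by
      rw [Nat.choose_two_right, show m + 2 - 1 = m + 1 from rfl,
        Nat.mul_div_cancel' hdvd, Nat.mul_comm]
    have hCC : (2 : ℝ[X]) * (((m+2).choose 2 : ℕ) : ℝ[X])
        = ((m+1 : ℕ) : ℝ[X]) * ((m+2 : ℕ) : ℝ[X]) := by
      exact_mod_cast congrArg (Nat.cast : ℕ → ℝ[X]) h2
    have hC2 : (C 2 : ℝ[X]) = 2 := map_ofNat C 2
    simp only [nsmul_eq_mul] at key ⊢
    simp only [C_eq_natCast, hC2] at key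
    push_cast at key hCC ⊢
    linear_combination key - (derivative^[m+1] ((X ^ 2 - C a * X) ^ (m+1))) * hCC

/-! ### Endpoint vanishing and integration by parts -/

lemma X_dvd_vq (a : ℝ) : (X - C 0 : ℝ[X]) ∣ (X ^ 2 - C a * X) := by
  rw [C_0, sub_zero]
  exact ⟨X - C a, by ring⟩

lemma Xa_dvd_vq (a : ℝ) : (X - C a : ℝ[X]) ∣ (X ^ 2 - C a * X) := ⟨X, by ring⟩

lemma eval_iterate_vanish (r : ℝ) {f : ℝ[X]} {n k : ℕ} (hk : k < n)
    (hdvd : (X - C r) ^ n ∣ f) : (derivative^[k] f).eval r = 0 := by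
  have h := pow_sub_dvd_iterate_derivative_of_pow_dvd k hdvd
  have h1 : (X - C r) ∣ derivative^[k] f :=
    dvd_trans (dvd_pow_self _ (by omega : n - k ≠ 0)) h
  exact dvd_iff_isRoot.mp h1

lemma rodu_vanish (a : ℝ) {n k : ℕ} (hk : k < n) :
    (derivative^[k] ((X ^ 2 - C a * X) ^ n)).eval 0 = 0 ∧
      (derivative^[k] ((X ^ 2 - C a * X) ^ n)).eval a = 0 := by
  constructor
  · exact eval_iterate_vanish 0 hk (pow_dvd_pow_of_dvd (X_dvd_vq a) n)
  · exact eval_iterate_vanish a hk (pow_dvd_pow_of_dvd (Xa_dvd_vq a) n)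

lemma poly_ii (a : ℝ) (f : ℝ → ℝ) (hf : Continuous f) :
    IntervalIntegrable f volume 0 a := hf.intervalIntegrable _ _

/-- Integration by parts for polynomials on `[0, a]`. -/
lemma ibp (a : ℝ) (f g : ℝ[X]) :
    ∫ x in (0:ℝ)..a, (derivative f).eval x * g.eval x
      = f.eval a * g.eval a - f.eval 0 * g.eval 0
        - ∫ x in (0:ℝ)..a, f.eval x * (derivative g).eval x := by
  have h := intervalIntegral.integral_deriv_mul_eq_sub
    (u := fun x => f.eval x) (v := fun x => g.eval x)
    (u' := fun x => (derivative f).eval x) (v' := fun x => (derivative g).eval x)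
    (fun x _ => f.hasDerivAt x) (fun x _ => g.hasDerivAt x)
    (poly_ii a _ (derivative f).continuous) (poly_ii a _ (derivative g).continuous)
  rw [intervalIntegral.integral_add
    (poly_ii a (fun x => (derivative f).eval x * g.eval x) ((derivative f).continuous.mul g.continuous))
    (poly_ii a (fun x => f.eval x * (derivative g).eval x) (f.continuous.mul (derivative g).continuous))] at h
  linarith

/-- Orthogonality of `rod a n` to all polynomials of lower degree. -/
lemma rod_orth (a : ℝ) (n : ℕ) (Q : ℝ[X]) (hQ : Q.natDegree < n) :
    ∫ x in (0:ℝ)..a, (rod a n).eval x * Q.eval x = 0 := by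
  have main : ∀ k, k ≤ n →
      ∫ x in (0:ℝ)..a, (rod a n).eval x * Q.eval x
        = (-1:ℝ)^k * ∫ x in (0:ℝ)..a,
            (derivative^[n-k] ((X ^ 2 - C a * X) ^ n)).eval x * (derivative^[k] Q).eval x := by
    intro k
    induction k with
    | zero => intro _; simp [rod]
    | succ k ih =>
      intro hk1
      rw [ih (by omega)]
      rw [show n - k = (n - (k+1)) + 1 by omega, Function.iterate_succ_apply' derivative]
      rw [ibp a (derivative^[n-(k+1)] ((X ^ 2 - C a * X) ^ n)) (derivative^[k] Q)]
      rw [(rodu_vanish a (by omega : n - (k+1) < n)).1,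
          (rodu_vanish a (by omega : n - (k+1) < n)).2]
      rw [← Function.iterate_succ_apply' derivative k Q]
      ring
  rw [main n le_rfl, Nat.sub_self, Function.iterate_zero, id_eq,
      iterate_derivative_eq_zero hQ]
  simp

/-- The key bilinear identity: `∫ x(a-x) P' R' = n(n+1) ∫ R P` for `R = rod a n`. -/
lemma key_bform (a : ℝ) (n : ℕ) (P : ℝ[X]) :
    ∫ x in (0:ℝ)..a, (x * (a - x)) * ((derivative P).eval x * (derivative (rod a n)).eval x)
      = (n * (n+1) : ℝ) * ∫ x in (0:ℝ)..a, (rod a n).eval x * P.eval x := by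
  have h := ibp a ((X ^ 2 - C a * X) * derivative (rod a n)) P
  rw [rod_eigen a n] at h
  have hva : (X ^ 2 - C a * X : ℝ[X]).eval a = 0 := by
    simp [eval_pow]
    ring
  have hb0 : (((X ^ 2 - C a * X) : ℝ[X]) * derivative (rod a n)).eval 0 = 0 := by
    simp
  have hba : (((X ^ 2 - C a * X) : ℝ[X]) * derivative (rod a n)).eval a = 0 := by
    rw [eval_mul, hva, zero_mul]
  rw [hb0, hba] at h
  simp only [zero_mul, sub_zero, zero_sub] at h
  have hL : ∫ x in (0:ℝ)..a, ((n * (n+1)) • rod a n).eval x * P.eval x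
      = (n * (n+1) : ℝ) * ∫ x in (0:ℝ)..a, (rod a n).eval x * P.eval x := by
    rw [← intervalIntegral.integral_const_mul]
    congr 1
    funext x
    simp [nsmul_eq_mul]
    push_cast
    ring
  rw [hL] at h
  rw [h, ← intervalIntegral.integral_neg]
  congr 1
  funext x
  simp [eval_mul, eval_sub, eval_pow]
  ring

/-- `rod a n` has `natDegree ≤ n` and nonzero `n`-th coefficient. -/
lemma rod_natDegree_le (a : ℝ) (n : ℕ) : (rod a n).natDegree ≤ n := by
  refine (natDegree_iterate_derivative _ _).trans ?_
  have : ((X ^ 2 - C a * X : ℝ[X]) ^ n).natDegree ≤ 2 * n := by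
    refine (natDegree_pow_le).trans ?_
    have := natDegree_vq a
    nlinarith
  omega

lemma degree_CaX_lt (a : ℝ) : (C a * X : ℝ[X]).degree < 2 :=
  lt_of_le_of_lt (degree_C_mul_X_le a) (by norm_num)

lemma monic_vq (a : ℝ) : ((X ^ 2 - C a * X : ℝ[X])).Monic :=
  monic_X_pow_sub (by exact_mod_cast degree_CaX_lt a)

lemma natDegree_vq_eq (a : ℝ) : (X ^ 2 - C a * X : ℝ[X]).natDegree = 2 := by
  have h : (X ^ 2 - C a * X : ℝ[X]).degree = 2 := by
    rw [degree_sub_eq_left_of_degree_lt]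
    · exact degree_X_pow 2
    · rw [degree_X_pow]; exact_mod_cast degree_CaX_lt a
  exact natDegree_eq_of_degree_eq_some h

lemma rod_coeff (a : ℝ) (n : ℕ) : (rod a n).coeff n = ((2*n).descFactorial n : ℝ) := by
  rw [rod, coeff_iterate_derivative]
  have hm : ((X ^ 2 - C a * X : ℝ[X]) ^ n).natDegree = 2 * n := by
    rw [natDegree_pow, natDegree_vq_eq]
    ring
  have hc : ((X ^ 2 - C a * X : ℝ[X]) ^ n).coeff (n + n) = 1 := by
    rw [show n + n = 2*n by ring, ← hm]
    exact ((monic_vq a).pow n).coeff_natDegree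
  rw [hc]
  simp [show n + n = 2*n by ring]

lemma cont_ev (f : ℝ[X]) : Continuous fun x : ℝ => f.eval x := f.continuous

lemma contw (a : ℝ) : Continuous fun x : ℝ => x * (a - x) :=
  continuous_id.mul (continuous_const.sub continuous_id)

/-- The 1D weighted inverse inequality on `[0,a]`. -/
theorem oneD (a : ℝ) (ha : 0 ≤ a) (p : ℕ) :
    ∀ P : ℝ[X], P.natDegree ≤ p →
      ∫ x in (0:ℝ)..a, (x * (a - x)) * ((derivative P).eval x)^2
        ≤ (p * (p+1) : ℝ) * ∫ x in (0:ℝ)..a, (P.eval x)^2 := by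
  induction p with
  | zero =>
    intro P hP
    obtain ⟨c, rfl⟩ : ∃ c, P = C c := ⟨P.coeff 0, eq_C_of_natDegree_le_zero hP⟩
    simp only [derivative_C, eval_zero]
    rw [show ((0:ℕ) * ((0:ℕ)+1) : ℝ) = 0 by norm_num, zero_mul]
    simp
  | succ p ih =>
    intro P hP
    set R : ℝ[X] := rod a (p+1) with hR
    have hdpos : 0 < ((2*(p+1)).descFactorial (p+1)) :=
      Nat.pos_of_ne_zero (fun h => by have := Nat.descFactorial_eq_zero_iff_lt.mp h; omega)
    have hdne : (((2*(p+1)).descFactorial (p+1) : ℕ) : ℝ) ≠ 0 := by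
      exact_mod_cast Nat.pos_iff_ne_zero.mp hdpos
    set c : ℝ := P.coeff (p+1) / (((2*(p+1)).descFactorial (p+1) : ℕ) : ℝ) with hc
    set Q : ℝ[X] := P - C c * R with hQdef
    have hPQ : P = Q + C c * R := by rw [hQdef]; ring
    have hQdeg : Q.natDegree ≤ p := by
      refine natDegree_le_iff_coeff_eq_zero.mpr fun N hN => ?_
      rw [hQdef, coeff_sub, coeff_C_mul]
      rcases eq_or_lt_of_le (Nat.succ_le_of_lt hN) with h1 | h1
      · rw [← h1, hR, rod_coeff, hc, div_mul_cancel₀ _ hdne, sub_self]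
      · rw [natDegree_le_iff_coeff_eq_zero.mp hP N (by omega),
            coeff_eq_zero_of_natDegree_lt (lt_of_le_of_lt (rod_natDegree_le a (p+1)) (by omega)),
            mul_zero, sub_zero]
    have hOrth : ∫ x in (0:ℝ)..a, R.eval x * Q.eval x = 0 :=
      rod_orth a (p+1) Q (by omega)
    -- L² norm decomposition
    have hnorm : ∫ x in (0:ℝ)..a, (P.eval x)^2
        = (∫ x in (0:ℝ)..a, (Q.eval x)^2) + c^2 * ∫ x in (0:ℝ)..a, (R.eval x)^2 := by
      have hpt : (fun x => (P.eval x)^2)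
          = fun x => (Q.eval x)^2 + ((2*c) * (R.eval x * Q.eval x) + c^2 * (R.eval x)^2) := by
        funext x
        rw [hPQ]
        simp only [eval_add, eval_mul, eval_C]
        ring
      rw [hpt, intervalIntegral.integral_add (poly_ii a (fun x => (Q.eval x)^2) ((cont_ev Q).pow 2))
            (poly_ii a (fun x => (2*c) * (R.eval x * Q.eval x) + c^2 * (R.eval x)^2) ((continuous_const.mul ((cont_ev R).mul (cont_ev Q))).add
              (continuous_const.mul ((cont_ev R).pow 2)))),
          intervalIntegral.integral_add
            (poly_ii a (fun x => (2*c) * (R.eval x * Q.eval x)) (continuous_const.mul ((cont_ev R).mul (cont_ev Q))))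
            (poly_ii a (fun x => c^2 * (R.eval x)^2) (continuous_const.mul ((cont_ev R).pow 2))),
          intervalIntegral.integral_const_mul, intervalIntegral.integral_const_mul, hOrth]
      ring
    -- B-form decomposition
    have hder : derivative P = derivative Q + C c * derivative R := by
      rw [hPQ]
      simp [derivative_add, derivative_C_mul]
    have hcross : ∫ x in (0:ℝ)..a, (x * (a - x)) * ((derivative Q).eval x * (derivative R).eval x)
        = 0 := by
      rw [hR, key_bform a (p+1) Q, hOrth, mul_zero]
    have hRR : ∫ x in (0:ℝ)..a, (x * (a - x)) * ((derivative R).eval x * (derivative R).eval x)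
        = ((p+1) * (p+2) : ℝ) * ∫ x in (0:ℝ)..a, (R.eval x)^2 := by
      rw [hR, key_bform a (p+1) R]
      have : ∫ x in (0:ℝ)..a, (rod a (p+1)).eval x * (rod a (p+1)).eval x
          = ∫ x in (0:ℝ)..a, ((rod a (p+1)).eval x)^2 := by
        congr 1; funext x; ring
      rw [this]
      push_cast
      ring
    have hBsplit : ∫ x in (0:ℝ)..a, (x * (a - x)) * ((derivative P).eval x)^2
        = (∫ x in (0:ℝ)..a, (x * (a - x)) * ((derivative Q).eval x)^2)
          + c^2 * (((p+1) * (p+2) : ℝ) * ∫ x in (0:ℝ)..a, (R.eval x)^2) := by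
      have hpt : (fun x => (x * (a - x)) * ((derivative P).eval x)^2)
          = fun x => (x * (a - x)) * ((derivative Q).eval x)^2
              + ((2*c) * ((x * (a - x)) * ((derivative Q).eval x * (derivative R).eval x))
                + c^2 * ((x * (a - x)) * ((derivative R).eval x * (derivative R).eval x))) := by
        funext x
        rw [hder]
        simp only [eval_add, eval_mul, eval_C]
        ring
      rw [hpt, intervalIntegral.integral_add
            (poly_ii a (fun x => (x * (a - x)) * ((derivative Q).eval x)^2) ((contw a).mul ((cont_ev _).pow 2)))
            (poly_ii a (fun x => (2*c) * ((x * (a - x)) * ((derivative Q).eval x * (derivative R).eval x))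
                  + c^2 * ((x * (a - x)) * ((derivative R).eval x * (derivative R).eval x)))
              ((continuous_const.mul ((contw a).mul
                ((cont_ev _).mul (cont_ev _)))).add
              (continuous_const.mul ((contw a).mul ((cont_ev _).mul (cont_ev _)))))),
          intervalIntegral.integral_add
            (poly_ii a (fun x => (2*c) * ((x * (a - x)) * ((derivative Q).eval x * (derivative R).eval x)))
              (continuous_const.mul ((contw a).mul ((cont_ev _).mul (cont_ev _)))))
            (poly_ii a (fun x => c^2 * ((x * (a - x)) * ((derivative R).eval x * (derivative R).eval x)))
              (continuous_const.mul ((contw a).mul ((cont_ev _).mul (cont_ev _))))),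
          intervalIntegral.integral_const_mul, intervalIntegral.integral_const_mul,
          hcross, hRR]
      ring
    -- put it together
    have hIH := ih Q hQdeg
    have hIQ : (0:ℝ) ≤ ∫ x in (0:ℝ)..a, (Q.eval x)^2 :=
      intervalIntegral.integral_nonneg ha fun x _ => sq_nonneg _
    have hIR : (0:ℝ) ≤ ∫ x in (0:ℝ)..a, (R.eval x)^2 :=
      intervalIntegral.integral_nonneg ha fun x _ => sq_nonneg _
    rw [hBsplit, hnorm]
    have hc2 : (0:ℝ) ≤ c^2 := sq_nonneg c
    push_cast
    push_cast at hIH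
    nlinarith [mul_nonneg hc2 hIR, hIQ]

/-- Weight-squared corollary of the 1D inequality. -/
theorem oneD_sq (a : ℝ) (ha0 : 0 ≤ a) (ha1 : a ≤ 1) (p : ℕ) (P : ℝ[X])
    (hP : P.natDegree ≤ p) :
    ∫ x in (0:ℝ)..a, ((x * (a - x)) * (derivative P).eval x)^2
      ≤ (p * (p+1) : ℝ)/4 * ∫ x in (0:ℝ)..a, (P.eval x)^2 := by
  have h1 : ∫ x in (0:ℝ)..a, ((x * (a - x)) * (derivative P).eval x)^2
      ≤ ∫ x in (0:ℝ)..a, (1/4) * ((x * (a - x)) * ((derivative P).eval x)^2) := by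
    apply intervalIntegral.integral_mono_on ha0
    · exact poly_ii a _ (((contw a).mul (cont_ev _)).pow 2)
    · exact poly_ii a _ (continuous_const.mul ((contw a).mul ((cont_ev _).pow 2)))
    · intro x hx
      obtain ⟨hx0, hxa⟩ := hx
      have hw0 : 0 ≤ x * (a - x) := mul_nonneg hx0 (by linarith)
      have ha2 : a^2 ≤ 1 := by nlinarith
      have hw1 : x * (a - x) ≤ 1/4 := by nlinarith [sq_nonneg (a - 2*x)]
      nlinarith [mul_nonneg (mul_nonneg (by linarith : (0:ℝ) ≤ 1/4 - x*(a-x)) hw0)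
        (sq_nonneg ((derivative P).eval x))]
  rw [intervalIntegral.integral_const_mul] at h1
  have h2 := oneD a ha0 p P hP
  linarith

/-! ### Slicing multivariate polynomials -/

noncomputable def sliceX (y : ℝ) (f : MvPolynomial (Fin 2) ℝ) : ℝ[X] :=
  MvPolynomial.aeval ![Polynomial.X, Polynomial.C y] f

noncomputable def sliceY (x : ℝ) (f : MvPolynomial (Fin 2) ℝ) : ℝ[X] :=
  MvPolynomial.aeval ![Polynomial.C x, Polynomial.X] f

lemma eval_sliceX (y x : ℝ) (f : MvPolynomial (Fin 2) ℝ) :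
    (sliceX y f).eval x = MvPolynomial.eval ![x, y] f := by
  induction f using MvPolynomial.induction_on with
  | C r => simp [sliceX]
  | add f g hf hg => simp [sliceX, map_add, hf, hg] at *
  | mul_X f i hf =>
    fin_cases i <;>
      simp [sliceX, map_mul, hf] at * <;> simp [hf]

lemma eval_sliceY (x y : ℝ) (f : MvPolynomial (Fin 2) ℝ) :
    (sliceY x f).eval y = MvPolynomial.eval ![x, y] f := by
  induction f using MvPolynomial.induction_on with
  | C r => simp [sliceY]
  | add f g hf hg => simp [sliceY, map_add, hf, hg] at *
  | mul_X f i hf =>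
    fin_cases i <;>
      simp [sliceY, map_mul, hf] at * <;> simp [hf]

lemma derivative_sliceX (y : ℝ) (f : MvPolynomial (Fin 2) ℝ) :
    derivative (sliceX y f) = sliceX y (MvPolynomial.pderiv 0 f) := by
  induction f using MvPolynomial.induction_on with
  | C r => simp [sliceX]
  | add f g hf hg => simp [sliceX, map_add, hf, hg] at *
  | mul_X f i hf =>
    simp only [sliceX] at hf ⊢
    fin_cases i <;>
      simp [map_mul, MvPolynomial.pderiv_mul, MvPolynomial.pderiv_X, map_add, hf] <;>
      ring

lemma derivative_sliceY (x : ℝ) (f : MvPolynomial (Fin 2) ℝ) :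
    derivative (sliceY x f) = sliceY x (MvPolynomial.pderiv 1 f) := by
  induction f using MvPolynomial.induction_on with
  | C r => simp [sliceY]
  | add f g hf hg => simp [sliceY, map_add, hf, hg] at *
  | mul_X f i hf =>
    simp only [sliceY] at hf ⊢
    fin_cases i <;>
      simp [map_mul, MvPolynomial.pderiv_mul, MvPolynomial.pderiv_X, map_add, hf] <;>
      ring

lemma natDegree_sliceX (y : ℝ) (f : MvPolynomial (Fin 2) ℝ) :
    (sliceX y f).natDegree ≤ f.totalDegree := by
  rw [sliceX, MvPolynomial.aeval_def, MvPolynomial.eval₂_eq']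
  apply natDegree_sum_le_of_forall_le
  intro d hd
  refine (natDegree_mul_le).trans ?_
  rw [Fin.prod_univ_two]
  simp only [Matrix.cons_val_zero, Matrix.cons_val_one, Matrix.head_cons]
  have h1 : (algebraMap ℝ ℝ[X] (MvPolynomial.coeff d f)).natDegree = 0 := natDegree_C _
  have h2 : ((X : ℝ[X]) ^ d 0 * C y ^ d 1).natDegree ≤ d 0 := by
    refine (natDegree_mul_le).trans ?_
    have hc : ((C y : ℝ[X]) ^ d 1).natDegree = 0 := by rw [← C_pow]; exact natDegree_C _
    rw [natDegree_X_pow, hc]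
    omega
  have h3 : d 0 + d 1 ≤ f.totalDegree := by
    have := MvPolynomial.le_totalDegree hd
    rwa [Finsupp.sum_fintype _ _ (fun _ => rfl), Fin.sum_univ_two] at this
  omega

lemma natDegree_sliceY (x : ℝ) (f : MvPolynomial (Fin 2) ℝ) :
    (sliceY x f).natDegree ≤ f.totalDegree := by
  rw [sliceY, MvPolynomial.aeval_def, MvPolynomial.eval₂_eq']
  apply natDegree_sum_le_of_forall_le
  intro d hd
  refine (natDegree_mul_le).trans ?_
  rw [Fin.prod_univ_two]
  simp only [Matrix.cons_val_zero, Matrix.cons_val_one, Matrix.head_cons]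
  have h1 : (algebraMap ℝ ℝ[X] (MvPolynomial.coeff d f)).natDegree = 0 := natDegree_C _
  have h2 : ((C x : ℝ[X]) ^ d 0 * X ^ d 1).natDegree ≤ d 1 := by
    refine (natDegree_mul_le).trans ?_
    have hc : ((C x : ℝ[X]) ^ d 0).natDegree = 0 := by rw [← C_pow]; exact natDegree_C _
    rw [natDegree_X_pow, hc]
    omega
  have h3 : d 0 + d 1 ≤ f.totalDegree := by
    have := MvPolynomial.le_totalDegree hd
    rwa [Finsupp.sum_fintype _ _ (fun _ => rfl), Fin.sum_univ_two] at this
  omega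

/-! ### The reference triangle: compactness and Fubini slicing -/

lemma refTriangle_isClosed : IsClosed refTriangle := by
  have h1 : IsClosed {z : ℝ × ℝ | 0 ≤ z.1} := isClosed_le continuous_const continuous_fst
  have h2 : IsClosed {z : ℝ × ℝ | 0 ≤ z.2} := isClosed_le continuous_const continuous_snd
  have h3 : IsClosed {z : ℝ × ℝ | z.1 + z.2 ≤ 1} :=
    isClosed_le (continuous_fst.add continuous_snd) continuous_const
  have : refTriangle = ({z : ℝ × ℝ | 0 ≤ z.1} ∩ {z | 0 ≤ z.2}) ∩ {z | z.1 + z.2 ≤ 1} := by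
    ext z; simp [refTriangle, and_assoc]
  rw [this]
  exact (h1.inter h2).inter h3

lemma refTriangle_isCompact : IsCompact refTriangle := by
  refine (isCompact_Icc (a := ((0:ℝ), (0:ℝ))) (b := ((1:ℝ), (1:ℝ)))).of_isClosed_subset
    refTriangle_isClosed ?_
  intro z hz
  obtain ⟨h1, h2, h3⟩ := mem_refTriangle.mp hz
  constructor <;> constructor <;> simp <;> linarith

lemma refTriangle_measurable : MeasurableSet refTriangle :=
  refTriangle_isClosed.measurableSet

lemma integrableOn_T (g : ℝ × ℝ → ℝ) (hg : Continuous g) :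
    IntegrableOn g refTriangle volume :=
  hg.continuousOn.integrableOn_compact refTriangle_isCompact

lemma integrable_ind_T (g : ℝ × ℝ → ℝ) (hg : Continuous g) :
    Integrable (refTriangle.indicator g) volume :=
  (integrableOn_T g hg).integrable_indicator refTriangle_measurable

/-- Fubini slicing with the second variable outside. -/
lemma slice_y (g : ℝ × ℝ → ℝ) (hg : Continuous g) :
    (∫ z in refTriangle, g z)
        = (∫ y in Set.Icc (0:ℝ) 1, ∫ x in Set.Icc (0:ℝ) (1-y), g (x, y))
      ∧ IntegrableOn (fun y => ∫ x in Set.Icc (0:ℝ) (1-y), g (x, y)) (Set.Icc (0:ℝ) 1) := by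
  have hind : Integrable (refTriangle.indicator g) (volume.prod volume) := by
    rw [← MeasureTheory.Measure.volume_eq_prod]
    exact integrable_ind_T g hg
  have claim1 : ∀ y : ℝ, (∫ x, refTriangle.indicator g (x, y))
      = (Set.Icc (0:ℝ) 1).indicator (fun y' => ∫ x in Set.Icc (0:ℝ) (1-y'), g (x, y')) y := by
    intro y
    by_cases hy : y ∈ Set.Icc (0:ℝ) 1
    · have hfun : (fun x => refTriangle.indicator g (x, y))
          = (Set.Icc (0:ℝ) (1-y)).indicator (fun x => g (x, y)) := by
        funext x
        by_cases hx : x ∈ Set.Icc (0:ℝ) (1-y)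
        · rw [Set.indicator_of_mem hx, Set.indicator_of_mem]
          simp only [Set.mem_Icc] at hx hy
          exact mem_refTriangle.mpr ⟨hx.1, hy.1, by simp; linarith [hx.2]⟩
        · rw [Set.indicator_of_notMem hx, Set.indicator_of_notMem]
          intro hmem
          obtain ⟨h1, h2, h3⟩ := mem_refTriangle.mp hmem
          simp only [Set.mem_Icc] at hx
          simp only at h1 h2 h3
          exact hx ⟨h1, by linarith⟩
      rw [hfun, MeasureTheory.integral_indicator measurableSet_Icc,
          Set.indicator_of_mem hy]
    · have hfun : (fun x => refTriangle.indicator g (x, y)) = fun _ => (0:ℝ) := by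
        funext x
        rw [Set.indicator_of_notMem]
        intro hmem
        obtain ⟨h1, h2, h3⟩ := mem_refTriangle.mp hmem
        simp only at h1 h2 h3
        simp only [Set.mem_Icc, not_and, not_le] at hy
        have := hy h2
        linarith
      rw [hfun, Set.indicator_of_notMem hy]
      simp
  constructor
  · calc ∫ z in refTriangle, g z = ∫ z, refTriangle.indicator g z :=
          (MeasureTheory.integral_indicator refTriangle_measurable).symm
    _ = ∫ z, refTriangle.indicator g z ∂(volume.prod volume) := by
          rw [← MeasureTheory.Measure.volume_eq_prod]
    _ = ∫ y, ∫ x, refTriangle.indicator g (x, y) := integral_prod_symm _ hind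
    _ = ∫ y, (Set.Icc (0:ℝ) 1).indicator
          (fun y' => ∫ x in Set.Icc (0:ℝ) (1-y'), g (x, y')) y := by
          congr 1; funext y; exact claim1 y
    _ = ∫ y in Set.Icc (0:ℝ) 1, ∫ x in Set.Icc (0:ℝ) (1-y), g (x, y) :=
          MeasureTheory.integral_indicator measurableSet_Icc
  · have h1 : Integrable (fun y => ∫ x, refTriangle.indicator g (x, y)) volume :=
      hind.integral_prod_right
    have h2 : Integrable ((Set.Icc (0:ℝ) 1).indicator
        (fun y' => ∫ x in Set.Icc (0:ℝ) (1-y'), g (x, y'))) volume := by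
      have : (fun y => ∫ x, refTriangle.indicator g (x, y))
          = (Set.Icc (0:ℝ) 1).indicator
              (fun y' => ∫ x in Set.Icc (0:ℝ) (1-y'), g (x, y')) := funext claim1
      rwa [this] at h1
    exact (integrable_indicator_iff measurableSet_Icc).mp h2

/-- Fubini slicing with the first variable outside. -/
lemma slice_x (g : ℝ × ℝ → ℝ) (hg : Continuous g) :
    (∫ z in refTriangle, g z)
        = (∫ x in Set.Icc (0:ℝ) 1, ∫ y in Set.Icc (0:ℝ) (1-x), g (x, y))
      ∧ IntegrableOn (fun x => ∫ y in Set.Icc (0:ℝ) (1-x), g (x, y)) (Set.Icc (0:ℝ) 1) := by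
  have hind : Integrable (refTriangle.indicator g) (volume.prod volume) := by
    rw [← MeasureTheory.Measure.volume_eq_prod]
    exact integrable_ind_T g hg
  have claim1 : ∀ x : ℝ, (∫ y, refTriangle.indicator g (x, y))
      = (Set.Icc (0:ℝ) 1).indicator (fun x' => ∫ y in Set.Icc (0:ℝ) (1-x'), g (x', y)) x := by
    intro x
    by_cases hx : x ∈ Set.Icc (0:ℝ) 1
    · have hfun : (fun y => refTriangle.indicator g (x, y))
          = (Set.Icc (0:ℝ) (1-x)).indicator (fun y => g (x, y)) := by
        funext y
        by_cases hy : y ∈ Set.Icc (0:ℝ) (1-x)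
        · rw [Set.indicator_of_mem hy, Set.indicator_of_mem]
          simp only [Set.mem_Icc] at hx hy
          exact mem_refTriangle.mpr ⟨hx.1, hy.1, by simp; linarith [hy.2]⟩
        · rw [Set.indicator_of_notMem hy, Set.indicator_of_notMem]
          intro hmem
          obtain ⟨h1, h2, h3⟩ := mem_refTriangle.mp hmem
          simp only [Set.mem_Icc] at hy
          simp only at h1 h2 h3
          exact hy ⟨h2, by linarith⟩
      rw [hfun, MeasureTheory.integral_indicator measurableSet_Icc,
          Set.indicator_of_mem hx]
    · have hfun : (fun y => refTriangle.indicator g (x, y)) = fun _ => (0:ℝ) := by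
        funext y
        rw [Set.indicator_of_notMem]
        intro hmem
        obtain ⟨h1, h2, h3⟩ := mem_refTriangle.mp hmem
        simp only at h1 h2 h3
        simp only [Set.mem_Icc, not_and, not_le] at hx
        have := hx h1
        linarith
      rw [hfun, Set.indicator_of_notMem hx]
      simp
  constructor
  · calc ∫ z in refTriangle, g z = ∫ z, refTriangle.indicator g z :=
          (MeasureTheory.integral_indicator refTriangle_measurable).symm
    _ = ∫ z, refTriangle.indicator g z ∂(volume.prod volume) := by
          rw [← MeasureTheory.Measure.volume_eq_prod]
    _ = ∫ x, ∫ y, refTriangle.indicator g (x, y) := integral_prod _ hind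
    _ = ∫ x, (Set.Icc (0:ℝ) 1).indicator
          (fun x' => ∫ y in Set.Icc (0:ℝ) (1-x'), g (x', y)) x := by
          congr 1; funext x; exact claim1 x
    _ = ∫ x in Set.Icc (0:ℝ) 1, ∫ y in Set.Icc (0:ℝ) (1-x), g (x, y) :=
          MeasureTheory.integral_indicator measurableSet_Icc
  · have h1 : Integrable (fun x => ∫ y, refTriangle.indicator g (x, y)) volume :=
      hind.integral_prod_left
    have h2 : Integrable ((Set.Icc (0:ℝ) 1).indicator
        (fun x' => ∫ y in Set.Icc (0:ℝ) (1-x'), g (x', y))) volume := by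
      have : (fun x => ∫ y, refTriangle.indicator g (x, y))
          = (Set.Icc (0:ℝ) 1).indicator
              (fun x' => ∫ y in Set.Icc (0:ℝ) (1-x'), g (x', y)) := funext claim1
      rwa [this] at h1
    exact (integrable_indicator_iff measurableSet_Icc).mp h2

/-! ### Continuity of multivariate polynomial evaluation -/

lemma cont_mv (f : MvPolynomial (Fin 2) ℝ) :
    Continuous fun z : ℝ × ℝ => MvPolynomial.eval ![z.1, z.2] f := by
  induction f using MvPolynomial.induction_on with
  | C r => simpa using continuous_const
  | add f g hf hg =>
    simp only [map_add]
    exact hf.add hg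
  | mul_X f i hf =>
    simp only [map_mul, MvPolynomial.eval_X]
    apply hf.mul
    fin_cases i
    · simpa using continuous_fst
    · simpa using continuous_snd

lemma cont_mv_x (f : MvPolynomial (Fin 2) ℝ) (y : ℝ) :
    Continuous fun x : ℝ => MvPolynomial.eval ![x, y] f := by
  induction f using MvPolynomial.induction_on with
  | C r => simpa using continuous_const
  | add f g hf hg =>
    simp only [map_add]
    exact hf.add hg
  | mul_X f i hf =>
    simp only [map_mul, MvPolynomial.eval_X]
    apply hf.mul
    fin_cases i
    · simpa using continuous_id'
    · simpa using continuous_const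

lemma cont_mv_y (f : MvPolynomial (Fin 2) ℝ) (x : ℝ) :
    Continuous fun y : ℝ => MvPolynomial.eval ![x, y] f := by
  induction f using MvPolynomial.induction_on with
  | C r => simpa using continuous_const
  | add f g hf hg =>
    simp only [map_add]
    exact hf.add hg
  | mul_X f i hf =>
    simp only [map_mul, MvPolynomial.eval_X]
    apply hf.mul
    fin_cases i
    · simpa using continuous_const
    · simpa using continuous_id'

lemma eval_bubble (x y : ℝ) :
    MvPolynomial.eval ![x, y] triangleBubble = x * y * (1 - x - y) := by
  simp [triangleBubble]

lemma eval_pd0_bubble (x y : ℝ) :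
    MvPolynomial.eval ![x, y] (MvPolynomial.pderiv 0 triangleBubble)
      = y * (1 - 2*x - y) := by
  simp [triangleBubble, MvPolynomial.pderiv_mul, MvPolynomial.pderiv_X, MvPolynomial.pderiv_one]
  ring

lemma eval_pd1_bubble (x y : ℝ) :
    MvPolynomial.eval ![x, y] (MvPolynomial.pderiv 1 triangleBubble)
      = x * (1 - x - 2*y) := by
  simp [triangleBubble, MvPolynomial.pderiv_mul, MvPolynomial.pderiv_X, MvPolynomial.pderiv_one]
  ring

/-! ### Inner slice estimates -/

lemma inner_x (p : ℕ) (q : MvPolynomial (Fin 2) ℝ) (hq : q.totalDegree ≤ p)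
    (y : ℝ) (hy : y ∈ Set.Icc (0:ℝ) 1) :
    ∫ x in Set.Icc (0:ℝ) (1-y),
        (MvPolynomial.eval ![x, y] triangleBubble)^2
          * (MvPolynomial.eval ![x, y] (MvPolynomial.pderiv 0 q))^2
      ≤ (p * (p+1) : ℝ)/4 * ∫ x in Set.Icc (0:ℝ) (1-y), (MvPolynomial.eval ![x, y] q)^2 := by
  obtain ⟨hy0, hy1⟩ := hy
  set a : ℝ := 1 - y with ha
  have ha0 : 0 ≤ a := by linarith
  have ha1 : a ≤ 1 := by linarith
  set P : ℝ[X] := sliceX y q with hP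
  have hPdeg : P.natDegree ≤ p := (natDegree_sliceX y q).trans hq
  have hder : ∀ x : ℝ, (derivative P).eval x = MvPolynomial.eval ![x, y] (MvPolynomial.pderiv 0 q) := by
    intro x
    rw [hP, derivative_sliceX, eval_sliceX]
  have hev : ∀ x : ℝ, P.eval x = MvPolynomial.eval ![x, y] q := fun x => eval_sliceX y x q
  have step1 : ∫ x in Set.Icc (0:ℝ) a,
      (MvPolynomial.eval ![x, y] triangleBubble)^2
        * (MvPolynomial.eval ![x, y] (MvPolynomial.pderiv 0 q))^2
      ≤ ∫ x in Set.Icc (0:ℝ) a, ((x * (a - x)) * (derivative P).eval x)^2 := by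
    apply setIntegral_mono_on
    · exact (((cont_mv_x triangleBubble y).pow 2).mul
        ((cont_mv_x (MvPolynomial.pderiv 0 q) y).pow 2)).continuousOn.integrableOn_compact
        isCompact_Icc
    · exact ((((contw a).mul (cont_ev (derivative P))).pow 2)).continuousOn.integrableOn_compact
        isCompact_Icc
    · exact measurableSet_Icc
    · intro x hx
      rw [eval_bubble, hder]
      have hy2 : y^2 ≤ 1 := by nlinarith
      have hxy : x * y * (1 - x - y) = y * (x * (a - x)) := by rw [ha]; ring
      rw [hxy]
      nlinarith [mul_nonneg (by linarith : (0:ℝ) ≤ 1 - y^2)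
        (sq_nonneg ((x * (a - x)) * MvPolynomial.eval ![x, y] (MvPolynomial.pderiv 0 q)))]
  have step2 : ∫ x in Set.Icc (0:ℝ) a, ((x * (a - x)) * (derivative P).eval x)^2
      ≤ (p * (p+1) : ℝ)/4 * ∫ x in Set.Icc (0:ℝ) a, (P.eval x)^2 := by
    have e1 : ∫ x in Set.Icc (0:ℝ) a, ((x * (a - x)) * (derivative P).eval x)^2
        = ∫ x in (0:ℝ)..a, ((x * (a - x)) * (derivative P).eval x)^2 := by
      rw [intervalIntegral.integral_of_le ha0, integral_Icc_eq_integral_Ioc]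
    have e2 : ∫ x in Set.Icc (0:ℝ) a, (P.eval x)^2
        = ∫ x in (0:ℝ)..a, (P.eval x)^2 := by
      rw [intervalIntegral.integral_of_le ha0, integral_Icc_eq_integral_Ioc]
    rw [e1, e2]
    exact oneD_sq a ha0 ha1 p P hPdeg
  have e3 : ∫ x in Set.Icc (0:ℝ) a, (P.eval x)^2
      = ∫ x in Set.Icc (0:ℝ) a, (MvPolynomial.eval ![x, y] q)^2 := by
    congr 1
    funext x
    rw [hev]
  rw [e3] at step2
  linarith

lemma inner_y (p : ℕ) (q : MvPolynomial (Fin 2) ℝ) (hq : q.totalDegree ≤ p)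
    (x : ℝ) (hx : x ∈ Set.Icc (0:ℝ) 1) :
    ∫ y in Set.Icc (0:ℝ) (1-x),
        (MvPolynomial.eval ![x, y] triangleBubble)^2
          * (MvPolynomial.eval ![x, y] (MvPolynomial.pderiv 1 q))^2
      ≤ (p * (p+1) : ℝ)/4 * ∫ y in Set.Icc (0:ℝ) (1-x), (MvPolynomial.eval ![x, y] q)^2 := by
  obtain ⟨hx0, hx1⟩ := hx
  set a : ℝ := 1 - x with ha
  have ha0 : 0 ≤ a := by linarith
  have ha1 : a ≤ 1 := by linarith
  set P : ℝ[X] := sliceY x q with hP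
  have hPdeg : P.natDegree ≤ p := (natDegree_sliceY x q).trans hq
  have hder : ∀ y : ℝ, (derivative P).eval y
      = MvPolynomial.eval ![x, y] (MvPolynomial.pderiv 1 q) := by
    intro y
    rw [hP, derivative_sliceY, eval_sliceY]
  have hev : ∀ y : ℝ, P.eval y = MvPolynomial.eval ![x, y] q := fun y => eval_sliceY x y q
  have step1 : ∫ y in Set.Icc (0:ℝ) a,
      (MvPolynomial.eval ![x, y] triangleBubble)^2
        * (MvPolynomial.eval ![x, y] (MvPolynomial.pderiv 1 q))^2
      ≤ ∫ y in Set.Icc (0:ℝ) a, ((y * (a - y)) * (derivative P).eval y)^2 := by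
    apply setIntegral_mono_on
    · exact (((cont_mv_y triangleBubble x).pow 2).mul
        ((cont_mv_y (MvPolynomial.pderiv 1 q) x).pow 2)).continuousOn.integrableOn_compact
        isCompact_Icc
    · exact ((((contw a).mul (cont_ev (derivative P))).pow 2)).continuousOn.integrableOn_compact
        isCompact_Icc
    · exact measurableSet_Icc
    · intro y hy
      rw [eval_bubble, hder]
      have hx2 : x^2 ≤ 1 := by nlinarith
      have hxy : x * y * (1 - x - y) = x * (y * (a - y)) := by rw [ha]; ring
      rw [hxy]
      nlinarith [mul_nonneg (by linarith : (0:ℝ) ≤ 1 - x^2)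
        (sq_nonneg ((y * (a - y)) * MvPolynomial.eval ![x, y] (MvPolynomial.pderiv 1 q)))]
  have step2 : ∫ y in Set.Icc (0:ℝ) a, ((y * (a - y)) * (derivative P).eval y)^2
      ≤ (p * (p+1) : ℝ)/4 * ∫ y in Set.Icc (0:ℝ) a, (P.eval y)^2 := by
    have e1 : ∫ y in Set.Icc (0:ℝ) a, ((y * (a - y)) * (derivative P).eval y)^2
        = ∫ y in (0:ℝ)..a, ((y * (a - y)) * (derivative P).eval y)^2 := by
      rw [intervalIntegral.integral_of_le ha0, integral_Icc_eq_integral_Ioc]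
    have e2 : ∫ y in Set.Icc (0:ℝ) a, (P.eval y)^2 = ∫ y in (0:ℝ)..a, (P.eval y)^2 := by
      rw [intervalIntegral.integral_of_le ha0, integral_Icc_eq_integral_Ioc]
    rw [e1, e2]
    exact oneD_sq a ha0 ha1 p P hPdeg
  have e3 : ∫ y in Set.Icc (0:ℝ) a, (P.eval y)^2
      = ∫ y in Set.Icc (0:ℝ) a, (MvPolynomial.eval ![x, y] q)^2 := by
    congr 1
    funext y
    rw [hev]
  rw [e3] at step2
  linarith

/-- Pointwise bound for the gradient components on the triangle. -/
lemma pt_bound (q : MvPolynomial (Fin 2) ℝ) (i : Fin 2) (z : ℝ × ℝ) (hz : z ∈ refTriangle) :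
    (MvPolynomial.eval ![z.1, z.2] (MvPolynomial.pderiv i (triangleBubble * q)))^2
      ≤ 2 * (MvPolynomial.eval ![z.1, z.2] q)^2
        + 2 * ((MvPolynomial.eval ![z.1, z.2] triangleBubble)^2
            * (MvPolynomial.eval ![z.1, z.2] (MvPolynomial.pderiv i q))^2) := by
  obtain ⟨h1, h2, h3⟩ := mem_refTriangle.mp hz
  have hsplit : MvPolynomial.eval ![z.1, z.2] (MvPolynomial.pderiv i (triangleBubble * q))
      = MvPolynomial.eval ![z.1, z.2] (MvPolynomial.pderiv i triangleBubble)
          * MvPolynomial.eval ![z.1, z.2] q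
        + MvPolynomial.eval ![z.1, z.2] triangleBubble
          * MvPolynomial.eval ![z.1, z.2] (MvPolynomial.pderiv i q) := by
    rw [MvPolynomial.pderiv_mul, map_add, map_mul, map_mul]
  rw [hsplit]
  have hu2 : (MvPolynomial.eval ![z.1, z.2] (MvPolynomial.pderiv i triangleBubble))^2 ≤ 1 := by
    fin_cases i
    · simp only [Fin.zero_eta]
      rw [eval_pd0_bubble]
      have e2 : (1 - 2*z.1 - z.2)^2 ≤ 1 := by
        nlinarith [mul_nonneg (by linarith : (0:ℝ) ≤ 2*z.1 + z.2)
          (by linarith : (0:ℝ) ≤ 2 - 2*z.1 - z.2)]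
      have e1 : z.2^2 ≤ 1 := by nlinarith
      nlinarith [mul_nonneg (sq_nonneg z.2) (by linarith : (0:ℝ) ≤ 1 - (1 - 2*z.1 - z.2)^2)]
    · simp only [Fin.mk_one]
      rw [eval_pd1_bubble]
      have e2 : (1 - z.1 - 2*z.2)^2 ≤ 1 := by
        nlinarith [mul_nonneg (by linarith : (0:ℝ) ≤ z.1 + 2*z.2)
          (by linarith : (0:ℝ) ≤ 2 - z.1 - 2*z.2)]
      have e1 : z.1^2 ≤ 1 := by nlinarith
      nlinarith [mul_nonneg (sq_nonneg z.1) (by linarith : (0:ℝ) ≤ 1 - (1 - z.1 - 2*z.2)^2)]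
  set u := MvPolynomial.eval ![z.1, z.2] (MvPolynomial.pderiv i triangleBubble)
  set Q := MvPolynomial.eval ![z.1, z.2] q
  set B := MvPolynomial.eval ![z.1, z.2] triangleBubble
  set D := MvPolynomial.eval ![z.1, z.2] (MvPolynomial.pderiv i q)
  nlinarith [sq_nonneg (u*Q - B*D), sq_nonneg (u*Q + B*D),
    mul_nonneg (by linarith : (0:ℝ) ≤ 1 - u^2) (sq_nonneg Q)]

theorem main :
    ∃ c : ℝ, 0 < c ∧
      ∀ p : ℕ, 1 ≤ p → ∀ q : MvPolynomial (Fin 2) ℝ, q.totalDegree ≤ p →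
        ∫ z in refTriangle,
            ((MvPolynomial.eval ![z.1, z.2] (MvPolynomial.pderiv 0 (triangleBubble * q))) ^ 2 +
              (MvPolynomial.eval ![z.1, z.2] (MvPolynomial.pderiv 1 (triangleBubble * q))) ^ 2) ≤
          c * (p : ℝ) ^ 2 *
            ∫ z in refTriangle, (MvPolynomial.eval ![z.1, z.2] q) ^ 2 := by
  refine ⟨6, by norm_num, ?_⟩
  intro p hp q hq
  have hp1 : (1:ℝ) ≤ (p:ℝ) := by exact_mod_cast hp
  set S := ∫ z in refTriangle, (MvPolynomial.eval ![z.1, z.2] q) ^ 2 with hSdef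
  have hS0 : 0 ≤ S :=
    setIntegral_nonneg refTriangle_measurable (fun z _ => sq_nonneg _)
  set W0 := ∫ z in refTriangle,
      (MvPolynomial.eval ![z.1, z.2] triangleBubble)^2
        * (MvPolynomial.eval ![z.1, z.2] (MvPolynomial.pderiv 0 q))^2 with hW0def
  set W1 := ∫ z in refTriangle,
      (MvPolynomial.eval ![z.1, z.2] triangleBubble)^2
        * (MvPolynomial.eval ![z.1, z.2] (MvPolynomial.pderiv 1 q))^2 with hW1def
  -- Fubini estimates for the weighted derivative terms
  have hW0 : W0 ≤ (p * (p+1) : ℝ)/4 * S := by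
    obtain ⟨hW0eq, hW0int⟩ := slice_y
      (fun z => (MvPolynomial.eval ![z.1, z.2] triangleBubble)^2
        * (MvPolynomial.eval ![z.1, z.2] (MvPolynomial.pderiv 0 q))^2)
      (((cont_mv triangleBubble).pow 2).mul ((cont_mv (MvPolynomial.pderiv 0 q)).pow 2))
    obtain ⟨hSeq, hSint⟩ := slice_y
      (fun z => (MvPolynomial.eval ![z.1, z.2] q)^2) ((cont_mv q).pow 2)
    rw [hW0def, hW0eq, hSdef, hSeq]
    calc (∫ y in Set.Icc (0:ℝ) 1, ∫ x in Set.Icc (0:ℝ) (1-y),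
            (MvPolynomial.eval ![x, y] triangleBubble)^2
              * (MvPolynomial.eval ![x, y] (MvPolynomial.pderiv 0 q))^2)
        ≤ ∫ y in Set.Icc (0:ℝ) 1, (p * (p+1) : ℝ)/4
            * ∫ x in Set.Icc (0:ℝ) (1-y), (MvPolynomial.eval ![x, y] q)^2 := by
          apply setIntegral_mono_on hW0int (hSint.const_mul _) measurableSet_Icc
          intro y hy
          exact inner_x p q hq y hy
      _ = (p * (p+1) : ℝ)/4 * ∫ y in Set.Icc (0:ℝ) 1,
            ∫ x in Set.Icc (0:ℝ) (1-y), (MvPolynomial.eval ![x, y] q)^2 :=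
          MeasureTheory.integral_const_mul _ _
  have hW1 : W1 ≤ (p * (p+1) : ℝ)/4 * S := by
    obtain ⟨hW1eq, hW1int⟩ := slice_x
      (fun z => (MvPolynomial.eval ![z.1, z.2] triangleBubble)^2
        * (MvPolynomial.eval ![z.1, z.2] (MvPolynomial.pderiv 1 q))^2)
      (((cont_mv triangleBubble).pow 2).mul ((cont_mv (MvPolynomial.pderiv 1 q)).pow 2))
    obtain ⟨hSeq, hSint⟩ := slice_x
      (fun z => (MvPolynomial.eval ![z.1, z.2] q)^2) ((cont_mv q).pow 2)
    rw [hW1def, hW1eq, hSdef, hSeq]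
    calc (∫ x in Set.Icc (0:ℝ) 1, ∫ y in Set.Icc (0:ℝ) (1-x),
            (MvPolynomial.eval ![x, y] triangleBubble)^2
              * (MvPolynomial.eval ![x, y] (MvPolynomial.pderiv 1 q))^2)
        ≤ ∫ x in Set.Icc (0:ℝ) 1, (p * (p+1) : ℝ)/4
            * ∫ y in Set.Icc (0:ℝ) (1-x), (MvPolynomial.eval ![x, y] q)^2 := by
          apply setIntegral_mono_on hW1int (hSint.const_mul _) measurableSet_Icc
          intro x hx
          exact inner_y p q hq x hx
      _ = (p * (p+1) : ℝ)/4 * ∫ x in Set.Icc (0:ℝ) 1,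
            ∫ y in Set.Icc (0:ℝ) (1-x), (MvPolynomial.eval ![x, y] q)^2 :=
          MeasureTheory.integral_const_mul _ _
  -- split the gradient integral and bound each part
  have hsplit : ∫ z in refTriangle,
      ((MvPolynomial.eval ![z.1, z.2] (MvPolynomial.pderiv 0 (triangleBubble * q))) ^ 2 +
        (MvPolynomial.eval ![z.1, z.2] (MvPolynomial.pderiv 1 (triangleBubble * q))) ^ 2)
      = (∫ z in refTriangle,
          (MvPolynomial.eval ![z.1, z.2] (MvPolynomial.pderiv 0 (triangleBubble * q))) ^ 2)
        + ∫ z in refTriangle,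
          (MvPolynomial.eval ![z.1, z.2] (MvPolynomial.pderiv 1 (triangleBubble * q))) ^ 2 :=
    integral_add
      (integrableOn_T _ ((cont_mv (MvPolynomial.pderiv 0 (triangleBubble * q))).pow 2))
      (integrableOn_T _ ((cont_mv (MvPolynomial.pderiv 1 (triangleBubble * q))).pow 2))
  have hA : ∀ i : Fin 2, ∫ z in refTriangle,
      (MvPolynomial.eval ![z.1, z.2] (MvPolynomial.pderiv i (triangleBubble * q))) ^ 2
      ≤ 2*S + 2*(∫ z in refTriangle,
          (MvPolynomial.eval ![z.1, z.2] triangleBubble)^2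
            * (MvPolynomial.eval ![z.1, z.2] (MvPolynomial.pderiv i q))^2) := by
    intro i
    have step : ∫ z in refTriangle,
        (MvPolynomial.eval ![z.1, z.2] (MvPolynomial.pderiv i (triangleBubble * q))) ^ 2
        ≤ ∫ z in refTriangle,
          (2 * (MvPolynomial.eval ![z.1, z.2] q)^2
            + 2 * ((MvPolynomial.eval ![z.1, z.2] triangleBubble)^2
                * (MvPolynomial.eval ![z.1, z.2] (MvPolynomial.pderiv i q))^2)) := by
      apply setIntegral_mono_on
        (integrableOn_T _ ((cont_mv (MvPolynomial.pderiv i (triangleBubble * q))).pow 2))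
        (((integrableOn_T _ ((cont_mv q).pow 2)).const_mul 2).add
          ((integrableOn_T _ (((cont_mv triangleBubble).pow 2).mul
            ((cont_mv (MvPolynomial.pderiv i q)).pow 2))).const_mul 2))
        refTriangle_measurable
      intro z hz
      exact pt_bound q i z hz
    have expand : ∫ z in refTriangle,
        (2 * (MvPolynomial.eval ![z.1, z.2] q)^2
          + 2 * ((MvPolynomial.eval ![z.1, z.2] triangleBubble)^2
              * (MvPolynomial.eval ![z.1, z.2] (MvPolynomial.pderiv i q))^2))
        = 2*S + 2*(∫ z in refTriangle,
            (MvPolynomial.eval ![z.1, z.2] triangleBubble)^2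
              * (MvPolynomial.eval ![z.1, z.2] (MvPolynomial.pderiv i q))^2) := by
      rw [integral_add ((integrableOn_T (fun z => (MvPolynomial.eval ![z.1, z.2] q)^2) ((cont_mv q).pow 2)).const_mul 2)
          ((integrableOn_T (fun z => (MvPolynomial.eval ![z.1, z.2] triangleBubble)^2
              * (MvPolynomial.eval ![z.1, z.2] (MvPolynomial.pderiv i q))^2) (((cont_mv triangleBubble).pow 2).mul
            ((cont_mv (MvPolynomial.pderiv i q)).pow 2))).const_mul 2),
        MeasureTheory.integral_const_mul, MeasureTheory.integral_const_mul]
    rw [expand] at step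
    exact step
  have hA0 := hA 0
  have hA1 := hA 1
  rw [← hW0def] at hA0
  rw [← hW1def] at hA1
  rw [hsplit]
  have hfin : 4 + (p:ℝ)*((p:ℝ)+1) ≤ 6*(p:ℝ)^2 := by nlinarith
  calc (∫ z in refTriangle,
          (MvPolynomial.eval ![z.1, z.2] (MvPolynomial.pderiv 0 (triangleBubble * q))) ^ 2)
        + ∫ z in refTriangle,
          (MvPolynomial.eval ![z.1, z.2] (MvPolynomial.pderiv 1 (triangleBubble * q))) ^ 2
      ≤ (2*S + 2*W0) + (2*S + 2*W1) := add_le_add hA0 hA1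
    _ ≤ 4*S + ((p:ℝ)*((p:ℝ)+1)) * S := by push_cast at hW0 hW1 ⊢; linarith
    _ ≤ 6 * (p:ℝ)^2 * S := by nlinarith [hS0, hfin]

end TriProof

/-- $hp$-explicit polynomial weighted H¹-to-L² inverse estimate
on the reference triangle (Proposition 3.7 of the paper, squared form). -/
theorem weighted_h1_inverse_estimate_triangle :
    ∃ c : ℝ, 0 < c ∧
      ∀ p : ℕ, 1 ≤ p → ∀ q : MvPolynomial (Fin 2) ℝ, q.totalDegree ≤ p →
        ∫ z in refTriangle,
            ((MvPolynomial.eval ![z.1, z.2] (MvPolynomial.pderiv 0 (triangleBubble * q))) ^ 2 +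
              (MvPolynomial.eval ![z.1, z.2] (MvPolynomial.pderiv 1 (triangleBubble * q))) ^ 2) ≤
          c * (p : ℝ) ^ 2 *
            ∫ z in refTriangle, (MvPolynomial.eval ![z.1, z.2] q) ^ 2 := by
  exact TriProof.main
end
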